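/- arXiv:2301.07007 — 12 statements merged into one kernel-verified Lean document; each statement's English description precedes it below -/
import Mathlib

section
/- Let C be a nonempty finite set with values λ : C → ℝ≥0 not identically zero and weights w : C → ℤ>0, and let ε > 0. With ρ(c) = λ(c)/w(c), R = max_{c∈C} ρ(c), and C^{(j)} = {c ∈ C : ρ(c) ≥ R·e^{−εj}}, the following holds: for every natural number j with j ≥ ln(R·w(C)/ε)/ε, one has λ(C^{(j)}) ≥ λ(C) − ε. -/
/-- For `j ≥ ln(R·w(C)/ε)/ε`, `λ(C^{(j)}) ≥ λ(C) − ε`. -/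
theorem stmt_0 {C : Type*} [Fintype C] [Nonempty C]
    (lam : C → ℝ) (hlam : ∀ c, 0 ≤ lam c) (hlamne : ∃ c, lam c ≠ 0)
    (w : C → ℤ) (hw : ∀ c, 0 < w c)
    (ε : ℝ) (hε : 0 < ε)
    (ρ : C → ℝ) (hρ : ∀ c, ρ c = lam c / (w c : ℝ))
    (R : ℝ) (hR : R = Finset.univ.sup' Finset.univ_nonempty ρ)
    (j : ℕ)
    (hj : (j : ℝ) ≥ Real.log (R * (∑ c, (w c : ℝ)) / ε) / ε) :
    (∑ c, lam c) - ε ≤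
      ∑ c ∈ Finset.univ.filter (fun c => R * Real.exp (-(ε * j)) ≤ ρ c), lam c := by
  set t := R * Real.exp (-(ε * j)) with ht
  have hwpos : ∀ c, (0 : ℝ) < (w c : ℝ) := fun c => by exact_mod_cast hw c
  obtain ⟨c0, hc0⟩ := hlamne
  have hlc0 : 0 < lam c0 := lt_of_le_of_ne (hlam c0) (Ne.symm hc0)
  have hρc0 : 0 < ρ c0 := by rw [hρ]; exact div_pos hlc0 (hwpos c0)
  have hRpos : 0 < R := lt_of_lt_of_le hρc0 (hR ▸ Finset.le_sup' ρ (Finset.mem_univ c0))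
  have hWpos : 0 < ∑ c, (w c : ℝ) :=
    Finset.sum_pos (fun c _ => hwpos c) Finset.univ_nonempty
  -- key bound: t * W ≤ ε
  have hexp : R * (∑ c, (w c : ℝ)) / ε ≤ Real.exp (ε * j) := by
    have h1 : Real.log (R * (∑ c, (w c : ℝ)) / ε) ≤ ε * j := by
      have := mul_le_mul_of_nonneg_left hj (le_of_lt hε)
      rw [mul_div_cancel₀ _ (ne_of_gt hε)] at this
      linarith
    calc R * (∑ c, (w c : ℝ)) / ε
        = Real.exp (Real.log (R * (∑ c, (w c : ℝ)) / ε)) := by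
          rw [Real.exp_log (by positivity)]
      _ ≤ Real.exp (ε * j) := Real.exp_le_exp.mpr h1
  have hkey : t * (∑ c, (w c : ℝ)) ≤ ε := by
    have h2 : R * (∑ c, (w c : ℝ)) ≤ ε * Real.exp (ε * j) := by
      have := mul_le_mul_of_nonneg_left hexp (le_of_lt hε)
      rwa [mul_div_cancel₀ _ (ne_of_gt hε)] at this
    have h3 : 0 < Real.exp (ε * j) := Real.exp_pos _
    rw [ht, Real.exp_neg]
    calc R * (Real.exp (ε * j))⁻¹ * (∑ c, (w c : ℝ))
        = R * (∑ c, (w c : ℝ)) * (Real.exp (ε * j))⁻¹ := by ring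
      _ ≤ ε * Real.exp (ε * j) * (Real.exp (ε * j))⁻¹ := by
          apply mul_le_mul_of_nonneg_right h2 (by positivity)
      _ = ε := by field_simp
  have hsplit := Finset.sum_filter_add_sum_filter_not Finset.univ
    (fun c => t ≤ ρ c) lam
  have hrest : ∑ c ∈ Finset.univ.filter (fun c => ¬ t ≤ ρ c), lam c ≤ ε := by
    calc ∑ c ∈ Finset.univ.filter (fun c => ¬ t ≤ ρ c), lam c
        ≤ ∑ c ∈ Finset.univ.filter (fun c => ¬ t ≤ ρ c), t * (w c : ℝ) := by
          apply Finset.sum_le_sum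
          intro c hc
          have hc' : ρ c < t := lt_of_not_ge (Finset.mem_filter.mp hc).2
          have : lam c = ρ c * (w c : ℝ) := by
            rw [hρ, div_mul_cancel₀ _ (ne_of_gt (hwpos c))]
          rw [this]
          exact mul_le_mul_of_nonneg_right (le_of_lt hc') (le_of_lt (hwpos c))
      _ ≤ ∑ c, t * (w c : ℝ) := by
          apply Finset.sum_le_sum_of_subset_of_nonneg (Finset.filter_subset _ _)
          intro c _ _
          have : 0 ≤ t := by positivity
          exact mul_nonneg this (le_of_lt (hwpos c))
      _ = t * (∑ c, (w c : ℝ)) := by rw [Finset.mul_sum]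
      _ ≤ ε := hkey
  linarith
end

section
/- Let C be a nonempty finite set with values λ : C → ℝ≥0 not identically zero and weights w : C → ℤ>0, let ε > 0, and set ρ(c) = λ(c)/w(c), R = max_{c∈C} ρ(c), r_j = R·e^{−εj}, and C^{(j)} = {c ∈ C : ρ(c) ≥ r_j}. Then for every function f : C → ℝ≥0 and every natural number k, ∑_{j=0}^{k} f(C^{(j)})·(r_j − r_{j+1}) ≤ ∑_{c ∈ C^{(k)}} f(c)·ρ(c). -/
/-! Exchanging the order of summation, each `c` contributes `f c` times the sum of the
increments `r j - r (j + 1)` over those `j ≤ k` with `r j ≤ ρ c`. Since `r` is antitone these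
`j` form a final segment of `[0, k]`, so the increments telescope to at most
`ρ c - r (k + 1) ≤ ρ c`. -/

open Finset

section AntitoneIncrements

variable {r : ℕ → ℝ}

theorem Antitone.sum_range_filter_sub_succ_le_max (hr : Antitone r) (x : ℝ) (n : ℕ) :
    ∑ j ∈ (range n).filter (fun j => r j ≤ x), (r j - r (j + 1)) ≤ max (x - r n) 0 := by
  induction n with
  | zero => simp
  | succ n ih =>
    have hstep : r (n + 1) ≤ r n := hr n.le_succ
    rw [range_add_one, filter_insert]
    split_ifs with hn
    · rw [sum_insert (by simp)]
      rw [max_eq_left (by linarith)] at ih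
      rw [max_eq_left (by linarith)]
      linarith
    · exact ih.trans (max_le_max_right 0 (by linarith))

theorem Antitone.sum_range_succ_filter_sub_succ_le (hr : Antitone r) {k : ℕ}
    (hr₀ : 0 ≤ r (k + 1)) (x : ℝ) :
    ∑ j ∈ (range (k + 1)).filter (fun j => r j ≤ x), (r j - r (j + 1))
      ≤ if r k ≤ x then x else 0 := by
  split_ifs with hk
  · calc _ ≤ max (x - r (k + 1)) 0 := hr.sum_range_filter_sub_succ_le_max x (k + 1)
      _ ≤ x := max_le (by linarith) (hr₀.trans ((hr k.le_succ).trans hk))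
  · refine (sum_eq_zero fun j hj => ?_).le
    have hjk : j ≤ k := Nat.lt_succ_iff.mp (mem_range.mp (mem_filter.mp hj).1)
    exact absurd ((hr hjk).trans (mem_filter.mp hj).2) hk

end AntitoneIncrements

theorem sum_sum_filter_mul_eq_sum_mul_sum_filter {ι κ : Type*} (s : Finset ι) (t : Finset κ)
    (p : ι → κ → Prop) [∀ j c, Decidable (p j c)] (f : κ → ℝ) (g : ι → ℝ) :
    ∑ j ∈ s, (∑ c ∈ t.filter (p j), f c) * g j
      = ∑ c ∈ t, f c * ∑ j ∈ s.filter (fun j => p j c), g j := by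
  simp only [sum_filter, sum_mul, mul_sum, ite_mul, mul_ite, zero_mul, mul_zero]
  rw [sum_comm]

theorem stmt_1_general {C : Type*} [Fintype C] [Nonempty C]
    (lam : C → ℝ) (hlam : ∀ c, 0 ≤ lam c)
    (w : C → ℤ) (hw : ∀ c, 0 < w c)
    (ε : ℝ) (hε : 0 < ε)
    (ρ : C → ℝ) (hρ : ∀ c, ρ c = lam c / (w c : ℝ))
    (R : ℝ) (hR : R = Finset.univ.sup' Finset.univ_nonempty ρ)
    (r : ℕ → ℝ) (hr : ∀ j : ℕ, r j = R * Real.exp (-(ε * j)))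
    (f : C → ℝ) (hf : ∀ c, 0 ≤ f c) (k : ℕ) :
    ∑ j ∈ Finset.range (k + 1),
        (∑ c ∈ Finset.univ.filter (fun c => r j ≤ ρ c), f c) * (r j - r (j + 1))
      ≤ ∑ c ∈ Finset.univ.filter (fun c => r k ≤ ρ c), f c * ρ c := by
  obtain ⟨c₀⟩ := ‹Nonempty C›
  have hR₀ : 0 ≤ R := by
    have hρ₀ : 0 ≤ ρ c₀ := by
      rw [hρ]
      exact div_nonneg (hlam c₀) (by exact_mod_cast (hw c₀).le)
    exact hρ₀.trans (hR ▸ le_sup' ρ (mem_univ c₀))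
  have hr_anti : Antitone r := fun i j hij => by
    rw [hr, hr]
    gcongr
  have hr₀ : 0 ≤ r (k + 1) := by rw [hr]; positivity
  rw [sum_sum_filter_mul_eq_sum_mul_sum_filter, sum_filter]
  refine sum_le_sum fun c _ => ?_
  calc _ ≤ f c * if r k ≤ ρ c then ρ c else 0 :=
        mul_le_mul_of_nonneg_left (hr_anti.sum_range_succ_filter_sub_succ_le hr₀ (ρ c)) (hf c)
    _ = _ := by rw [mul_ite, mul_zero]

/-- Riemann-like lower bound:
`∑_{j=0}^{k} f(C^{(j)})·(r_j − r_{j+1}) ≤ ∑_{c ∈ C^{(k)}} f(c)·ρ(c)`. -/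
theorem stmt_1 {C : Type*} [Fintype C] [Nonempty C]
    (lam : C → ℝ) (hlam : ∀ c, 0 ≤ lam c) (hlamne : ∃ c, lam c ≠ 0)
    (w : C → ℤ) (hw : ∀ c, 0 < w c)
    (ε : ℝ) (hε : 0 < ε)
    (ρ : C → ℝ) (hρ : ∀ c, ρ c = lam c / (w c : ℝ))
    (R : ℝ) (hR : R = Finset.univ.sup' Finset.univ_nonempty ρ)
    (r : ℕ → ℝ) (hr : ∀ j : ℕ, r j = R * Real.exp (-(ε * j)))
    (f : C → ℝ) (hf : ∀ c, 0 ≤ f c) (k : ℕ) :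
    ∑ j ∈ Finset.range (k + 1),
        (∑ c ∈ Finset.univ.filter (fun c => r j ≤ ρ c), f c) * (r j - r (j + 1))
      ≤ ∑ c ∈ Finset.univ.filter (fun c => r k ≤ ρ c), f c * ρ c :=
  stmt_1_general lam hlam w hw ε hε ρ hρ R hR r hr f hf k
end

section
/- Let ℓ be a natural number, let p ≥ 1 be a real number, and let d_0 ≤ d_1 ≤ ⋯ ≤ d_ℓ be nonnegative real numbers with d_i ≤ 2^i for every i ∈ {0, …, ℓ}. Then d_ℓ^p ≤ p·d_0 + ∑_{i=1}^{ℓ} p·2^{i(p−1)}·(d_i − d_{i−1}). -/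
/-!
Telescope `d ℓ ^ p = d 0 ^ p + ∑ (d i ^ p - d (i - 1) ^ p)`. By convexity of `x ↦ x ^ p`
(Bernoulli's inequality) each increment satisfies
`d i ^ p - d (i - 1) ^ p ≤ p * d i ^ (p - 1) * (d i - d (i - 1))`, and `d i ≤ 2 ^ i` bounds
`d i ^ (p - 1)` by `2 ^ (i * (p - 1))`; the first term is the same estimate with `d (-1) = 0`.
-/

open Real Finset

lemma Real.rpow_sub_rpow_le_mul_rpow_mul_sub {x y p : ℝ} (hp : 1 ≤ p) (hy : 0 ≤ y)
    (hyx : y ≤ x) : x ^ p - y ^ p ≤ p * x ^ (p - 1) * (x - y) := by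
  rcases (hy.trans hyx).eq_or_lt with rfl | hx
  · simp [le_antisymm hyx hy]
  -- Bernoulli's inequality at `s = y / x - 1`, multiplied by `x ^ p`.
  have bernoulli : 1 + p * (y / x - 1) ≤ (y / x) ^ p := by
    have := one_add_mul_self_le_rpow_one_add (s := y / x - 1)
      (by linarith [div_nonneg hy hx.le]) hp
    rwa [add_sub_cancel] at this
  have hxp : x ^ p = x ^ (p - 1) * x := by
    rw [rpow_sub_one hx.ne', div_mul_cancel₀ _ hx.ne']
  rw [div_rpow hy hx.le, le_div_iff₀ (rpow_pos_of_pos hx p)] at bernoulli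
  have hx1 : x ^ p * (y / x) = x ^ (p - 1) * y := by
    rw [hxp]; field_simp
  nlinarith

lemma Real.rpow_sub_rpow_le_of_le_two_pow {x y p : ℝ} {i : ℕ} (hp : 1 ≤ p) (hy : 0 ≤ y)
    (hyx : y ≤ x) (hx : x ≤ 2 ^ i) :
    x ^ p - y ^ p ≤ p * (2 : ℝ) ^ ((i : ℝ) * (p - 1)) * (x - y) := by
  have hpow : x ^ (p - 1) ≤ (2 : ℝ) ^ ((i : ℝ) * (p - 1)) := by
    rw [rpow_mul zero_le_two, rpow_natCast]
    exact rpow_le_rpow (hy.trans hyx) hx (by linarith)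
  calc x ^ p - y ^ p ≤ p * x ^ (p - 1) * (x - y) := rpow_sub_rpow_le_mul_rpow_mul_sub hp hy hyx
    _ ≤ p * (2 : ℝ) ^ ((i : ℝ) * (p - 1)) * (x - y) := by gcongr

lemma Finset.le_add_sum_Icc_of_sub_le {α : Type*} [AddCommGroup α] [PartialOrder α]
    [IsOrderedAddMonoid α] {f g : ℕ → α} {c : α} {n : ℕ} (h0 : f 0 ≤ c)
    (hstep : ∀ i ∈ Icc 1 n, f i - f (i - 1) ≤ g i) : f n ≤ c + ∑ i ∈ Icc 1 n, g i := by
  induction n with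
  | zero => simpa using h0
  | succ n ih =>
    rw [sum_Icc_succ_top (by omega), ← add_assoc]
    have hlast := hstep (n + 1) (by simp)
    have hprev := ih fun i hi => hstep i (Icc_subset_Icc_right n.le_succ hi)
    simp only [Nat.add_sub_cancel] at hlast
    calc f (n + 1) = f n + (f (n + 1) - f n) := (add_sub_cancel _ _).symm
      _ ≤ _ := add_le_add hprev hlast

/-- If `d_0 ≤ ⋯ ≤ d_ℓ` are nonnegative reals with `d_i ≤ 2^i`, then
`d_ℓ^p ≤ p·d_0 + ∑_{i=1}^{ℓ} p·2^{i(p−1)}·(d_i − d_{i−1})` for every real `p ≥ 1`. -/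
theorem stmt_2 (ℓ : ℕ) (p : ℝ) (hp : 1 ≤ p) (d : ℕ → ℝ)
    (hnn : ∀ i ≤ ℓ, 0 ≤ d i)
    (hmono : ∀ i < ℓ, d i ≤ d (i + 1))
    (hcap : ∀ i ≤ ℓ, d i ≤ 2 ^ i) :
    d ℓ ^ p ≤ p * d 0 +
      ∑ i ∈ Finset.Icc 1 ℓ, p * (2 : ℝ) ^ ((i : ℝ) * (p - 1)) * (d i - d (i - 1)) := by
  refine le_add_sum_Icc_of_sub_le (f := fun i => d i ^ p) ?_ fun i hi => ?_
  · have h := rpow_sub_rpow_le_of_le_two_pow (i := 0) hp le_rfl (hnn 0 ℓ.zero_le) (hcap 0 ℓ.zero_le)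
    simpa [zero_rpow (by linarith : p ≠ 0)] using h
  · obtain ⟨hi1, hiℓ⟩ := mem_Icc.mp hi
    have hmono' : d (i - 1) ≤ d i := by
      simpa [Nat.sub_add_cancel hi1] using hmono (i - 1) (by omega)
    exact rpow_sub_rpow_le_of_le_two_pow hp (hnn (i - 1) (by omega)) hmono' (hcap i hiℓ)
end

section
/- Let G = (C, S, E) be a finite bipartite graph, w : C → ℤ>0 client weights, ℓ a natural number, and (x_0, …, x_ℓ) a fractional (w, 2^i)-nested matching hierarchy on G. Then for every real p ≥ 1, ∑_{s ∈ S} x_ℓ(δ(s))^p ≤ p·x_0(E) + ∑_{i=1}^{ℓ} p·2^{i(p−1)}·(x_i − x_{i−1})(E). -/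
/-!
Fix a server `s` and write `yᵢ = xᵢ(δ(s))`. Nestedness makes `y₀ ≤ y₁ ≤ ⋯ ≤ y_ℓ` and the server
capacities give `yᵢ ≤ 2 ^ i`. Telescoping `y_ℓ ^ p` and bounding each increment by
convexity of `t ↦ t ^ p` (a secant slope is at most the derivative at its right end),
`yᵢ ^ p - yᵢ₋₁ ^ p ≤ p (2 ^ i) ^ (p - 1) (yᵢ - yᵢ₋₁)`, bounds `y_ℓ ^ p` by a linear
expression in the `yᵢ`; summing over `s` turns each `yᵢ` into `xᵢ(E)`.
-/

open Finset

lemma rpow_sub_rpow_le_mul_rpow_sub_one {a b M p : ℝ} (ha : 0 ≤ a) (hab : a ≤ b) (hbM : b ≤ M)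
    (hp : 1 ≤ p) : b ^ p - a ^ p ≤ p * M ^ (p - 1) * (b - a) := by
  rcases hab.eq_or_lt with rfl | hlt
  · simp
  have hslope : slope (fun x : ℝ => x ^ p) a b ≤ p * b ^ (p - 1) :=
    (convexOn_rpow hp).slope_le_of_hasDerivAt ha (ha.trans hab) hlt
      (Real.hasDerivAt_rpow_const (Or.inr hp))
  rw [slope_def_field, div_le_iff₀ (sub_pos.mpr hlt)] at hslope
  calc b ^ p - a ^ p ≤ p * b ^ (p - 1) * (b - a) := hslope
    _ ≤ p * M ^ (p - 1) * (b - a) := by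
      have hb : 0 ≤ b := ha.trans hab
      gcongr

lemma rpow_le_of_monotone_of_le_caps {p : ℝ} (hp : 1 ≤ p) (g M : ℕ → ℝ) (n : ℕ)
    (hg : ∀ i ≤ n, 0 ≤ g i) (hmono : ∀ i < n, g i ≤ g (i + 1)) (hcap : ∀ i ≤ n, g i ≤ M i) :
    g n ^ p ≤ p * M 0 ^ (p - 1) * g 0 + ∑ i ∈ Icc 1 n, p * M i ^ (p - 1) * (g i - g (i - 1)) := by
  induction n with
  | zero =>
    have h := rpow_sub_rpow_le_mul_rpow_sub_one le_rfl (hg 0 le_rfl) (hcap 0 le_rfl) hp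
    rw [Real.zero_rpow (by positivity), sub_zero, sub_zero] at h
    simpa using h
  | succ n ih =>
    have hprev := ih (fun i hi => hg i (by omega)) (fun i hi => hmono i (by omega))
      (fun i hi => hcap i (by omega))
    have hstep := rpow_sub_rpow_le_mul_rpow_sub_one (hg n (by omega)) (hmono n (by omega))
      (hcap (n + 1) le_rfl) hp
    rw [sum_Icc_succ_top (by omega), Nat.add_sub_cancel]
    linarith

theorem stmt_3_general {C S : Type*} [Fintype S] [DecidableEq S]
    (E : Finset (C × S))
    (ℓ : ℕ) (x : ℕ → C × S → ℝ)
    (hnn : ∀ i ≤ ℓ, ∀ e, 0 ≤ x i e)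
    (hserver : ∀ i ≤ ℓ, ∀ s : S, ∑ e ∈ E.filter (fun e => e.2 = s), x i e ≤ 2 ^ i)
    (hnested : ∀ i, 1 ≤ i → i ≤ ℓ → ∀ e, x (i - 1) e ≤ x i e)
    (p : ℝ) (hp : 1 ≤ p) :
    ∑ s : S, (∑ e ∈ E.filter (fun e => e.2 = s), x ℓ e) ^ p
      ≤ p * (∑ e ∈ E, x 0 e) +
        ∑ i ∈ Finset.Icc 1 ℓ,
          p * (2 : ℝ) ^ ((i : ℝ) * (p - 1)) * (∑ e ∈ E, (x i e - x (i - 1) e)) := by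
  set y : ℕ → S → ℝ := fun i s => ∑ e ∈ E.filter (fun e => e.2 = s), x i e
  have hload : ∀ s, y ℓ s ^ p ≤ p * y 0 s +
      ∑ i ∈ Icc 1 ℓ, p * (2 : ℝ) ^ ((i : ℝ) * (p - 1)) * (y i s - y (i - 1) s) := by
    intro s
    have h := rpow_le_of_monotone_of_le_caps hp (fun i => y i s) (fun i => (2 : ℝ) ^ i) ℓ
      (fun i hi => sum_nonneg fun e _ => hnn i hi e)
      (fun i hi => sum_le_sum fun e _ => by simpa using hnested (i + 1) (by omega) hi e)
      (fun i hi => hserver i hi s)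
    simpa only [pow_zero, Real.one_rpow, mul_one, Real.rpow_mul zero_le_two,
      Real.rpow_natCast] using h
  calc ∑ s, y ℓ s ^ p
      ≤ ∑ s, (p * y 0 s +
          ∑ i ∈ Icc 1 ℓ, p * (2 : ℝ) ^ ((i : ℝ) * (p - 1)) * (y i s - y (i - 1) s)) :=
        sum_le_sum fun s _ => hload s
    _ = _ := by
      simp only [y, sum_add_distrib, ← mul_sum, ← sum_sub_distrib]
      rw [sum_comm, sum_fiberwise]
      simp only [← mul_sum, sum_fiberwise]

/-- Upper bound on `∑_s x_ℓ(δ(s))^p` for a fractional `(w, 2^i)`-nested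
matching hierarchy `(x_0, …, x_ℓ)` on a bipartite graph `G = (C, S, E)`. -/
theorem stmt_3 {C S : Type*} [Fintype C] [Fintype S] [DecidableEq C] [DecidableEq S]
    (E : Finset (C × S)) (w : C → ℤ) (hw : ∀ c, 0 < w c)
    (ℓ : ℕ) (x : ℕ → C × S → ℝ)
    (hnn : ∀ i ≤ ℓ, ∀ e, 0 ≤ x i e)
    (hclient : ∀ i ≤ ℓ, ∀ c : C, ∑ e ∈ E.filter (fun e => e.1 = c), x i e ≤ (w c : ℝ))
    (hserver : ∀ i ≤ ℓ, ∀ s : S, ∑ e ∈ E.filter (fun e => e.2 = s), x i e ≤ 2 ^ i)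
    (hnested : ∀ i, 1 ≤ i → i ≤ ℓ → ∀ e, x (i - 1) e ≤ x i e)
    (p : ℝ) (hp : 1 ≤ p) :
    ∑ s : S, (∑ e ∈ E.filter (fun e => e.2 = s), x ℓ e) ^ p
      ≤ p * (∑ e ∈ E, x 0 e) +
        ∑ i ∈ Finset.Icc 1 ℓ,
          p * (2 : ℝ) ^ ((i : ℝ) * (p - 1)) * (∑ e ∈ E, (x i e - x (i - 1) e)) :=
  stmt_3_general E ℓ x hnn hserver hnested p hp
end

section
/- Let ℓ be a natural number, let p ≥ 1 be a real number, and let d_0 ≤ d_1 ≤ ⋯ ≤ d_ℓ be nonnegative integers such that d_0 ∈ {0, 1} and, for every i ∈ {0, …, ℓ−1}, either d_{i+1} = d_i or d_i = 2^i. Then d_ℓ^p ≥ d_0 + ∑_{i=1}^{ℓ} p·2^{(i−1)(p−1)}·(d_i − d_{i−1}). -/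
/-!
Each summand is the increment of the tangent-line lower bound for the convex function `t ↦ t ^ p`:
whenever `d_i ≠ d_{i-1}` we have `d_{i-1} = 2^{i-1}`, so `p·2^{(i-1)(p-1)}` is exactly the slope
`p·d_{i-1}^{p-1}` at `d_{i-1}`. Hence `d_{i-1}^p + p·2^{(i-1)(p-1)}·(d_i - d_{i-1}) ≤ d_i^p`, and the
claim follows by telescoping from `d_0 ≤ d_0^p`.
-/

open Real

lemma rpow_add_mul_rpow_sub_one_mul_sub_le {x y p : ℝ} (hx : 0 < x) (hy : 0 ≤ y) (hp : 1 ≤ p) :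
    x ^ p + p * x ^ (p - 1) * (y - x) ≤ y ^ p := by
  have bernoulli := one_add_mul_self_le_rpow_one_add
    (show -1 ≤ (y - x) / x by rw [le_div_iff₀ hx]; linarith) hp
  have hyx : 1 + (y - x) / x = y / x := by field_simp; ring
  rw [hyx, div_rpow hy hx.le, le_div_iff₀ (rpow_pos_of_pos hx p)] at bernoulli
  calc x ^ p + p * x ^ (p - 1) * (y - x)
      = (1 + p * ((y - x) / x)) * x ^ p := by rw [rpow_sub_one hx.ne']; field_simp
    _ ≤ y ^ p := bernoulli

lemma Nat.cast_le_cast_rpow (n : ℕ) {p : ℝ} (hp : 1 ≤ p) : (n : ℝ) ≤ (n : ℝ) ^ p := by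
  rcases n.eq_zero_or_pos with rfl | hn
  · simp [zero_rpow (by linarith : p ≠ 0)]
  · exact self_le_rpow_of_one_le (by exact_mod_cast hn) hp

lemma cast_rpow_add_two_rpow_mul_sub_le {m k n : ℕ} {p : ℝ} (hp : 1 ≤ p) (h : k = m ∨ m = 2 ^ n) :
    (m : ℝ) ^ p + p * (2 : ℝ) ^ ((n : ℝ) * (p - 1)) * ((k : ℝ) - m) ≤ (k : ℝ) ^ p := by
  rcases h with rfl | rfl
  · simp
  · have slope : (2 : ℝ) ^ ((n : ℝ) * (p - 1)) = ((2 ^ n : ℕ) : ℝ) ^ (p - 1) := by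
      rw [rpow_mul zero_le_two, rpow_natCast, Nat.cast_pow, Nat.cast_ofNat]
    rw [slope]
    exact rpow_add_mul_rpow_sub_one_mul_sub_le (by positivity) k.cast_nonneg hp

theorem stmt_4_general (ℓ : ℕ) (p : ℝ) (hp : 1 ≤ p) (d : ℕ → ℕ)
    (hmax : ∀ i < ℓ, d (i + 1) = d i ∨ d i = 2 ^ i) :
    (d 0 : ℝ) +
        ∑ i ∈ Finset.Icc 1 ℓ,
          p * (2 : ℝ) ^ (((i : ℝ) - 1) * (p - 1)) * ((d i : ℝ) - (d (i - 1) : ℝ))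
      ≤ (d ℓ : ℝ) ^ p := by
  induction ℓ with
  | zero => simpa using Nat.cast_le_cast_rpow (d 0) hp
  | succ n ih =>
    have ih := ih fun i hi ↦ hmax i (by omega)
    have step := cast_rpow_add_two_rpow_mul_sub_le hp (hmax n n.lt_succ_self)
    rw [Finset.sum_Icc_succ_top (by omega), Nat.add_sub_cancel, Nat.cast_succ, add_sub_cancel_right]
    linarith

/-- If `d_0 ≤ ⋯ ≤ d_ℓ` are nonnegative integers with `d_0 ∈ {0,1}` and, for
each `i < ℓ`, either `d_{i+1} = d_i` or `d_i = 2^i`, then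
`d_ℓ^p ≥ d_0 + ∑_{i=1}^{ℓ} p·2^{(i−1)(p−1)}·(d_i − d_{i−1})` for every real `p ≥ 1`. -/
theorem stmt_4 (ℓ : ℕ) (p : ℝ) (hp : 1 ≤ p) (d : ℕ → ℕ)
    (hd0 : d 0 = 0 ∨ d 0 = 1)
    (hmono : ∀ i < ℓ, d i ≤ d (i + 1))
    (hmax : ∀ i < ℓ, d (i + 1) = d i ∨ d i = 2 ^ i) :
    (d 0 : ℝ) +
        ∑ i ∈ Finset.Icc 1 ℓ,
          p * (2 : ℝ) ^ (((i : ℝ) - 1) * (p - 1)) * ((d i : ℝ) - (d (i - 1) : ℝ))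
      ≤ (d ℓ : ℝ) ^ p :=
  stmt_4_general ℓ p hp d hmax
end

section
/- Let G = (C, S, E) be a finite bipartite graph, w : C → ℤ>0 client weights, ℓ a natural number, and (x_0, …, x_ℓ) a maximally-nested integral fractional (w, 2^i)-nested matching hierarchy on G. Then for every real p ≥ 1, ∑_{s ∈ S} x_ℓ(δ(s))^p ≥ x_0(E) + ∑_{i=1}^{ℓ} p·2^{(i−1)(p−1)}·(x_i − x_{i−1})(E). -/
/-!
Split both sides by server. At a single server `s` write `y i` for the load of `x_i` at `s`.
The load `y 0` is a nonnegative integer, so `y 0 ≤ (y 0) ^ p`. Going from level `i - 1` to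
level `i` the load either does not change or starts from the full capacity `y (i - 1) = 2 ^ (i - 1)`;
in the second case the convexity of `t ↦ t ^ p` (its tangent line at `2 ^ (i - 1)`, whose slope is
`p * 2 ^ ((i - 1) * (p - 1))`) bounds the increment term by `y i ^ p - y (i - 1) ^ p`. Telescoping
gives the inequality at each server, and summing over the servers gives the theorem.
-/

open Finset

namespace Real

lemma rpow_add_mul_rpow_sub_one_mul_sub_le {p a t : ℝ} (hp : 1 ≤ p) (ha : 0 < a) (ht : 0 ≤ t) :
    a ^ p + p * a ^ (p - 1) * (t - a) ≤ t ^ p := by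
  have bernoulli : 1 + p * (t / a - 1) ≤ (t / a) ^ p := by
    simpa using one_add_mul_self_le_rpow_one_add
      (by linarith [div_nonneg ht ha.le] : (-1 : ℝ) ≤ t / a - 1) hp
  calc a ^ p + p * a ^ (p - 1) * (t - a) = a ^ p * (1 + p * (t / a - 1)) := by
        rw [rpow_sub_one ha.ne']
        field_simp
    _ ≤ a ^ p * (t / a) ^ p := by gcongr
    _ = t ^ p := by
        rw [div_rpow ht ha.le]
        field_simp [(rpow_pos_of_pos ha p).ne']

lemma intCast_le_rpow {n : ℤ} (hn : 0 ≤ n) {p : ℝ} (hp : 1 ≤ p) : (n : ℝ) ≤ (n : ℝ) ^ p := by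
  rcases hn.eq_or_lt with rfl | hpos
  · simp [zero_rpow (by linarith : p ≠ 0)]
  · exact self_le_rpow_of_one_le (by exact_mod_cast hpos) hp

end Real

lemma add_sum_Icc_mul_sub_le_rpow {p : ℝ} (hp : 1 ≤ p) (y : ℕ → ℝ) (ℓ : ℕ)
    (h0 : y 0 ≤ y 0 ^ p) (hnonneg : ∀ i ≤ ℓ, 0 ≤ y i)
    (hfull : ∀ i < ℓ, y (i + 1) ≠ y i → y i = 2 ^ i) :
    y 0 + ∑ i ∈ Icc 1 ℓ, p * (2 : ℝ) ^ (((i : ℝ) - 1) * (p - 1)) * (y i - y (i - 1))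
      ≤ y ℓ ^ p := by
  induction ℓ with
  | zero => simpa using h0
  | succ n ih =>
    specialize ih (fun i hi => hnonneg i (by omega)) (fun i hi => hfull i (by omega))
    rw [sum_Icc_succ_top (by omega), ← add_assoc, Nat.add_sub_cancel]
    by_cases hne : y (n + 1) = y n
    · simpa [hne] using ih
    have hyn : y n = 2 ^ n := hfull n n.lt_succ_self hne
    have hweight : (2 : ℝ) ^ ((((n + 1 : ℕ) : ℝ) - 1) * (p - 1)) = ((2 : ℝ) ^ n) ^ (p - 1) := by
      rw [← Real.rpow_natCast, ← Real.rpow_mul zero_le_two]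
      push_cast
      ring_nf
    have tangent := Real.rpow_add_mul_rpow_sub_one_mul_sub_le hp (pow_pos two_pos n)
      (hnonneg (n + 1) le_rfl)
    rw [hweight, hyn]
    rw [hyn] at ih
    linarith

theorem stmt_5_general {C S : Type*} [Fintype S] [DecidableEq S]
    (E : Finset (C × S))
    (ℓ : ℕ) (x : ℕ → C × S → ℝ)
    (hnn : ∀ i ≤ ℓ, ∀ e, 0 ≤ x i e)
    (hintegral : ∀ i ≤ ℓ, ∀ e, ∃ n : ℤ, x i e = (n : ℝ))
    (hmaxnested : ∀ i < ℓ, ∀ s : S,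
      (∑ e ∈ E.filter (fun e => e.2 = s), x (i + 1) e) ≠
          (∑ e ∈ E.filter (fun e => e.2 = s), x i e) →
        (∑ e ∈ E.filter (fun e => e.2 = s), x i e) = 2 ^ i)
    (p : ℝ) (hp : 1 ≤ p) :
    (∑ e ∈ E, x 0 e) +
        ∑ i ∈ Finset.Icc 1 ℓ,
          p * (2 : ℝ) ^ (((i : ℝ) - 1) * (p - 1)) * (∑ e ∈ E, (x i e - x (i - 1) e))
      ≤ ∑ s : S, (∑ e ∈ E.filter (fun e => e.2 = s), x ℓ e) ^ p := by
  set y : ℕ → S → ℝ := fun i s => ∑ e ∈ E.filter (fun e => e.2 = s), x i e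
  have hload_nonneg (i : ℕ) (hi : i ≤ ℓ) (s : S) : 0 ≤ y i s :=
    sum_nonneg fun e _ => hnn i hi e
  have hbase (s : S) : y 0 s ≤ y 0 s ^ p := by
    choose n hn using hintegral 0 ℓ.zero_le
    have hy : y 0 s = (∑ e ∈ E.filter (fun e => e.2 = s), n e : ℤ) := by
      push_cast
      exact sum_congr rfl fun e _ => hn e
    have h0 := hload_nonneg 0 ℓ.zero_le s
    rw [hy] at h0 ⊢
    exact Real.intCast_le_rpow (by exact_mod_cast h0) hp
  calc (∑ e ∈ E, x 0 e) + ∑ i ∈ Icc 1 ℓ,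
          p * (2 : ℝ) ^ (((i : ℝ) - 1) * (p - 1)) * (∑ e ∈ E, (x i e - x (i - 1) e))
      = ∑ s, (y 0 s + ∑ i ∈ Icc 1 ℓ,
          p * (2 : ℝ) ^ (((i : ℝ) - 1) * (p - 1)) * (y i s - y (i - 1) s)) := by
        rw [sum_add_distrib, sum_comm (s := univ)]
        simp only [← sum_fiberwise E Prod.snd, ← sum_sub_distrib, mul_sum, y]
    _ ≤ ∑ s, y ℓ s ^ p := by
        exact sum_le_sum fun s _ => add_sum_Icc_mul_sub_le_rpow hp (y · s) ℓ (hbase s)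
          (fun i hi => hload_nonneg i hi s) (fun i hi => hmaxnested i hi s)

/-- Lower bound on `∑_s x_ℓ(δ(s))^p` for a maximally-nested integral
fractional `(w, 2^i)`-nested matching hierarchy `(x_0, …, x_ℓ)` on `G = (C, S, E)`. -/
theorem stmt_5 {C S : Type*} [Fintype C] [Fintype S] [DecidableEq C] [DecidableEq S]
    (E : Finset (C × S)) (w : C → ℤ) (hw : ∀ c, 0 < w c)
    (ℓ : ℕ) (x : ℕ → C × S → ℝ)
    (hnn : ∀ i ≤ ℓ, ∀ e, 0 ≤ x i e)
    (hclient : ∀ i ≤ ℓ, ∀ c : C, ∑ e ∈ E.filter (fun e => e.1 = c), x i e ≤ (w c : ℝ))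
    (hserver : ∀ i ≤ ℓ, ∀ s : S, ∑ e ∈ E.filter (fun e => e.2 = s), x i e ≤ 2 ^ i)
    (hnested : ∀ i, 1 ≤ i → i ≤ ℓ → ∀ e, x (i - 1) e ≤ x i e)
    (hintegral : ∀ i ≤ ℓ, ∀ e, ∃ n : ℤ, x i e = (n : ℝ))
    (hmaxnested : ∀ i < ℓ, ∀ s : S,
      (∑ e ∈ E.filter (fun e => e.2 = s), x (i + 1) e) ≠
          (∑ e ∈ E.filter (fun e => e.2 = s), x i e) →
        (∑ e ∈ E.filter (fun e => e.2 = s), x i e) = 2 ^ i)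
    (p : ℝ) (hp : 1 ≤ p) :
    (∑ e ∈ E, x 0 e) +
        ∑ i ∈ Finset.Icc 1 ℓ,
          p * (2 : ℝ) ^ (((i : ℝ) - 1) * (p - 1)) * (∑ e ∈ E, (x i e - x (i - 1) e))
      ≤ ∑ s : S, (∑ e ∈ E.filter (fun e => e.2 = s), x ℓ e) ^ p :=
  stmt_5_general E ℓ x hnn hintegral hmaxnested p hp
end

section
/- Let G = (C, S, E) be a finite bipartite graph with C nonempty, w : C → ℤ>0 client weights, and A ⊆ E an assignment. Let ℓ = ⌈log₂ w(C)⌉, where w(C) = ∑_{c∈C} w(c). Then there exists a maximally-nested fractional (w, 2^i)-nested matching hierarchy (x_0, …, x_ℓ) on G such that x_ℓ(cs) = w(c) for every edge cs ∈ A and x_ℓ(e) = 0 for every edge e ∉ A. -/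
/-!
Scale the assignment down server by server: at level `i`, every edge `cs ∈ A` carries the
fraction `min 1 (2^i / W s)` of `w c`, where `W s` is the load that `A` puts on `s`. A server
then receives exactly `min (W s) (2^i)`, so the levels are nested, a server's load only grows
after it is saturated, and once `2^i ≥ w(C) ≥ W s` nothing is scaled down any more.
-/

open Finset

namespace Assignment

variable {C S : Type*} [DecidableEq S] (A : Finset (C × S)) (w : C → ℝ)

def load (s : S) : ℝ := ∑ e ∈ A.filter (·.2 = s), w e.1

noncomputable def capped [DecidableEq C] (t : ℝ) (e : C × S) : ℝ :=
  if e ∈ A then w e.1 * min 1 (t / load A w e.2) else 0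

variable {A w}

theorem load_nonneg (hw : ∀ c, 0 ≤ w c) (s : S) : 0 ≤ load A w s :=
  sum_nonneg fun e _ => hw e.1

theorem le_load (hw : ∀ c, 0 ≤ w c) {e : C × S} (he : e ∈ A) : w e.1 ≤ load A w e.2 :=
  single_le_sum (f := fun e => w e.1) (fun e _ => hw e.1) (s := A.filter (·.2 = e.2))
    (mem_filter.2 ⟨he, rfl⟩)

variable [DecidableEq C]

theorem load_le_sum [Fintype C] (hw : ∀ c, 0 ≤ w c)
    (hA : Set.InjOn Prod.fst (A : Set (C × S))) (s : S) : load A w s ≤ ∑ c, w c :=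
  calc load A w s ≤ ∑ e ∈ A, w e.1 :=
        sum_le_sum_of_subset_of_nonneg (filter_subset _ _) fun e _ _ => hw e.1
    _ = ∑ c ∈ A.image Prod.fst, w c := (sum_image hA).symm
    _ ≤ ∑ c, w c := sum_le_sum_of_subset_of_nonneg (subset_univ _) fun c _ _ => hw c

theorem capped_nonneg (hw : ∀ c, 0 ≤ w c) {t : ℝ} (ht : 0 ≤ t) (e : C × S) :
    0 ≤ capped A w t e := by
  unfold capped
  split_ifs
  · exact mul_nonneg (hw e.1) (le_min zero_le_one (div_nonneg ht (load_nonneg hw e.2)))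
  · exact le_rfl

theorem capped_mono (hw : ∀ c, 0 ≤ w c) {t t' : ℝ} (htt' : t ≤ t') (e : C × S) :
    capped A w t e ≤ capped A w t' e := by
  unfold capped
  split_ifs
  · gcongr
    · exact hw e.1
    · exact load_nonneg hw e.2
  · exact le_rfl

theorem capped_of_load_le (hw : ∀ c, 0 ≤ w c) {t : ℝ} {e : C × S} (he : e ∈ A)
    (hload : load A w e.2 ≤ t) : capped A w t e = w e.1 := by
  rw [capped, if_pos he]
  rcases (load_nonneg hw e.2).eq_or_lt with h0 | hpos
  · have : w e.1 = 0 := le_antisymm (h0 ▸ le_load hw he) (hw e.1)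
    rw [this, zero_mul]
  · rw [min_eq_left ((one_le_div hpos).2 hload), mul_one]

theorem capped_of_notMem {t : ℝ} {e : C × S} (he : e ∉ A) : capped A w t e = 0 :=
  if_neg he

theorem sum_filter_capped {E : Finset (C × S)} (hAE : A ⊆ E) (p : C × S → Prop)
    [DecidablePred p] (t : ℝ) :
    ∑ e ∈ E.filter p, capped A w t e = ∑ e ∈ A.filter p, w e.1 * min 1 (t / load A w e.2) := by
  unfold capped
  rw [sum_ite_mem, filter_inter, inter_eq_right.2 hAE]

theorem mul_min_one_div {L t : ℝ} (hL : 0 ≤ L) (ht : 0 ≤ t) : L * min 1 (t / L) = min L t := by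
  rcases hL.eq_or_lt with rfl | hpos
  · rw [zero_mul, min_eq_left ht]
  · rw [mul_min_of_nonneg _ _ hpos.le, mul_one, mul_div_cancel₀ _ hpos.ne']

theorem sum_server_capped {E : Finset (C × S)} (hAE : A ⊆ E) (hw : ∀ c, 0 ≤ w c)
    {t : ℝ} (ht : 0 ≤ t) (s : S) :
    ∑ e ∈ E.filter (·.2 = s), capped A w t e = min (load A w s) t := by
  calc ∑ e ∈ E.filter (·.2 = s), capped A w t e
      = ∑ e ∈ A.filter (·.2 = s), w e.1 * min 1 (t / load A w s) :=
        (sum_filter_capped hAE _ t).trans (sum_congr rfl fun e he => by rw [(mem_filter.1 he).2])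
    _ = load A w s * min 1 (t / load A w s) := (sum_mul _ _ _).symm
    _ = min (load A w s) t := mul_min_one_div (load_nonneg hw s) ht

theorem sum_client_capped_le {E : Finset (C × S)} (hAE : A ⊆ E)
    (hw : ∀ c, 0 ≤ w c) (hA : Set.InjOn Prod.fst (A : Set (C × S))) (t : ℝ) (c : C) :
    ∑ e ∈ E.filter (·.1 = c), capped A w t e ≤ w c := by
  have hcard : #(A.filter (·.1 = c)) ≤ 1 := card_le_one.2 fun a ha b hb =>
    hA (mem_filter.1 ha).1 (mem_filter.1 hb).1 ((mem_filter.1 ha).2.trans (mem_filter.1 hb).2.symm)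
  calc ∑ e ∈ E.filter (·.1 = c), capped A w t e
      = ∑ e ∈ A.filter (·.1 = c), w e.1 * min 1 (t / load A w e.2) := sum_filter_capped hAE _ t
    _ ≤ ∑ _e ∈ A.filter (·.1 = c), w c := sum_le_sum fun e he => by
        rw [← (mem_filter.1 he).2]
        exact mul_le_of_le_one_right (hw e.1) (min_le_left _ _)
    _ = #(A.filter (·.1 = c)) * w c := by rw [sum_const, nsmul_eq_mul]
    _ ≤ w c := mul_le_of_le_one_left (hw c) (by exact_mod_cast hcard)

end Assignment

theorem min_eq_right_of_min_ne {α : Type*} [LinearOrder α] {a t t' : α} (htt' : t ≤ t')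
    (h : min a t' ≠ min a t) : min a t = t := by
  refine min_eq_right_iff.2 (le_of_not_ge fun hat => h ?_)
  rw [min_eq_left hat, min_eq_left (hat.trans htt')]

theorem le_two_pow_of_natCast_eq_ceil_logb {W : ℝ} (hW : 0 < W) {ℓ : ℕ}
    (hℓ : (ℓ : ℤ) = ⌈Real.logb 2 W⌉) : W ≤ 2 ^ ℓ := by
  have hlog : Real.logb 2 W ≤ ℓ := by exact_mod_cast hℓ ▸ Int.le_ceil (Real.logb 2 W)
  simpa using (Real.logb_le_iff_le_rpow one_lt_two hW).1 hlog

open Assignment in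
theorem stmt_6_general {C S : Type*} [Fintype C] [DecidableEq C] [DecidableEq S]
    [Nonempty C]
    (E : Finset (C × S)) (w : C → ℤ) (hw : ∀ c, 0 < w c)
    (A : Finset (C × S)) (hAE : A ⊆ E)
    (hA : ∀ c : C, ∃! e, e ∈ A ∧ e.1 = c)
    (ℓ : ℕ) (hℓ : (ℓ : ℤ) = ⌈Real.logb 2 (∑ c, (w c : ℝ))⌉) :
    ∃ x : ℕ → C × S → ℝ,
      (∀ i ≤ ℓ, ∀ e, 0 ≤ x i e) ∧
      (∀ i ≤ ℓ, ∀ c : C, ∑ e ∈ E.filter (fun e => e.1 = c), x i e ≤ (w c : ℝ)) ∧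
      (∀ i ≤ ℓ, ∀ s : S, ∑ e ∈ E.filter (fun e => e.2 = s), x i e ≤ 2 ^ i) ∧
      (∀ i, 1 ≤ i → i ≤ ℓ → ∀ e, x (i - 1) e ≤ x i e) ∧
      (∀ i < ℓ, ∀ s : S,
        (∑ e ∈ E.filter (fun e => e.2 = s), x (i + 1) e) ≠
            (∑ e ∈ E.filter (fun e => e.2 = s), x i e) →
          (∑ e ∈ E.filter (fun e => e.2 = s), x i e) = 2 ^ i) ∧
      (∀ e ∈ A, x ℓ e = (w e.1 : ℝ)) ∧
      (∀ e, e ∉ A → x ℓ e = 0) := by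
  have hw₀ : ∀ c, (0 : ℝ) ≤ w c := fun c => by exact_mod_cast (hw c).le
  have hinj : Set.InjOn Prod.fst (A : Set (C × S)) := fun a ha b hb hab =>
    (hA a.1).unique ⟨ha, rfl⟩ ⟨hb, hab.symm⟩
  have hserver := fun i => sum_server_capped (t := (2 : ℝ) ^ i) hAE hw₀ (by positivity)
  have htotal : ∑ c, (w c : ℝ) ≤ 2 ^ ℓ := le_two_pow_of_natCast_eq_ceil_logb
    (sum_pos (fun c _ => by exact_mod_cast hw c) univ_nonempty) hℓ
  refine ⟨fun i => capped A (fun c => (w c : ℝ)) (2 ^ i),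
    fun i _ => capped_nonneg hw₀ (by positivity),
    fun i _ => sum_client_capped_le hAE hw₀ hinj _, fun i _ s => ?_,
    fun i _ _ => capped_mono hw₀ (pow_le_pow_right₀ one_le_two (Nat.sub_le i 1)),
    fun i _ s => ?_, fun e he => capped_of_load_le hw₀ he ?_, fun e => capped_of_notMem⟩
  · exact (hserver i s).trans_le (min_le_right _ _)
  · simp only [hserver]
    exact min_eq_right_of_min_ne (pow_le_pow_right₀ one_le_two i.le_succ)
  · exact (load_le_sum hw₀ hinj e.2).trans htotal

/-- Every assignment `A` admits a maximally-nested fractional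
`(w, 2^i)`-nested matching hierarchy decomposition with `ℓ = ⌈log₂ w(C)⌉`. -/
theorem stmt_6 {C S : Type*} [Fintype C] [Fintype S] [DecidableEq C] [DecidableEq S]
    [Nonempty C]
    (E : Finset (C × S)) (w : C → ℤ) (hw : ∀ c, 0 < w c)
    (A : Finset (C × S)) (hAE : A ⊆ E)
    (hA : ∀ c : C, ∃! e, e ∈ A ∧ e.1 = c)
    (ℓ : ℕ) (hℓ : (ℓ : ℤ) = ⌈Real.logb 2 (∑ c, (w c : ℝ))⌉) :
    ∃ x : ℕ → C × S → ℝ,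
      (∀ i ≤ ℓ, ∀ e, 0 ≤ x i e) ∧
      (∀ i ≤ ℓ, ∀ c : C, ∑ e ∈ E.filter (fun e => e.1 = c), x i e ≤ (w c : ℝ)) ∧
      (∀ i ≤ ℓ, ∀ s : S, ∑ e ∈ E.filter (fun e => e.2 = s), x i e ≤ 2 ^ i) ∧
      (∀ i, 1 ≤ i → i ≤ ℓ → ∀ e, x (i - 1) e ≤ x i e) ∧
      (∀ i < ℓ, ∀ s : S,
        (∑ e ∈ E.filter (fun e => e.2 = s), x (i + 1) e) ≠
            (∑ e ∈ E.filter (fun e => e.2 = s), x i e) →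
          (∑ e ∈ E.filter (fun e => e.2 = s), x i e) = 2 ^ i) ∧
      (∀ e ∈ A, x ℓ e = (w e.1 : ℝ)) ∧
      (∀ e, e ∉ A → x ℓ e = 0) :=
  stmt_6_general E w hw A hAE hA ℓ hℓ
end

section
/- Let G = (C, S, E) be a finite bipartite graph with capacities κ : C → ℝ≥0 and τ : S → ℝ≥0, and let x, y, and x̃ be fractional (κ, τ)-matchings of G such that x̃(e) ≥ x(e) for every e ∈ E and, for every edge e = cs with y(e) > 0, at least one of the following holds: x̃(e) ≥ x(e) + y(e), or x̃(δ(c)) = κ(c), or x̃(δ(s)) = τ(s). Then 2·x̃(E) ≥ y(E). -/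
/-!
Charge `y` to `x̃`. On the edges at a client `c` with `x̃(δ(c)) = κ(c)` we have
`y(δ(c)) ≤ κ(c) = x̃(δ(c))`, and likewise at saturated servers; on any other edge with
`y(e) > 0` the edge is fully merged, so `y(e) ≤ x(e) + y(e) ≤ x̃(e)`. An edge of `x̃` is charged
at most twice: once through its client and once through its server or itself.
-/

/-- A fractional `(κ, τ)`-matching on the bipartite graph with edge set `E ⊆ C × S`. -/
def IsFracMatching {C S : Type*} [Fintype C] [Fintype S] [DecidableEq C] [DecidableEq S]
    (E : Finset (C × S)) (κ : C → ℝ) (τ : S → ℝ) (x : C × S → ℝ) : Prop :=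
  (∀ e, 0 ≤ x e) ∧
  (∀ c : C, ∑ e ∈ E.filter (fun e => e.1 = c), x e ≤ κ c) ∧
  (∀ s : S, ∑ e ∈ E.filter (fun e => e.2 = s), x e ≤ τ s)

namespace Finset

variable {ι : Type*} {s : Finset ι}

theorem sum_filter_comp_le_of_fiberwise_le {κ M : Type*} [Fintype κ] [DecidableEq κ]
    [AddCommMonoid M] [PartialOrder M] [IsOrderedAddMonoid M] {p : ι → κ} {T : κ → Prop}
    [DecidablePred T] {f g : ι → M}
    (h : ∀ k, T k → ∑ i ∈ s with p i = k, f i ≤ ∑ i ∈ s with p i = k, g i) :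
    ∑ i ∈ s with T (p i), f i ≤ ∑ i ∈ s with T (p i), g i := by
  have fiberwise (φ : ι → M) :
      ∑ i ∈ s with T (p i), φ i = ∑ k with T k, ∑ i ∈ s with p i = k, φ i := by
    rw [sum_fiberwise_eq_sum_filter s (univ.filter T) p φ]
    simp only [mem_filter, mem_univ, true_and]
  rw [fiberwise f, fiberwise g]
  exact sum_le_sum fun k hk => h k (mem_filter.mp hk).2

theorem sum_le_two_mul_sum_of_le_on_filters {R : Type*} [Field R] [LinearOrder R]
    [IsStrictOrderedRing R] {f g : ι → R} (P Q : ι → Prop)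
    [DecidablePred P] [DecidablePred Q] (hf : ∀ i ∈ s, 0 ≤ f i) (hg : ∀ i ∈ s, 0 ≤ g i)
    (hP : ∑ i ∈ s with P i, f i ≤ ∑ i ∈ s with P i, g i)
    (hQ : ∑ i ∈ s with Q i, f i ≤ ∑ i ∈ s with Q i, g i)
    (hR : ∀ i ∈ s, ¬P i ∧ ¬Q i → f i ≤ g i) :
    ∑ i ∈ s, f i ≤ 2 * ∑ i ∈ s, g i := by
  have hR' : ∑ i ∈ s with ¬P i ∧ ¬Q i, f i ≤ ∑ i ∈ s with ¬P i ∧ ¬Q i, g i :=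
    sum_le_sum fun i hi => hR i (mem_filter.mp hi).1 (mem_filter.mp hi).2
  calc ∑ i ∈ s, f i
      ≤ ∑ i ∈ s, ((if P i then f i else 0) + (if Q i then f i else 0)
          + (if ¬P i ∧ ¬Q i then f i else 0)) :=
        sum_le_sum fun i hi => by split_ifs <;> first | tauto | linarith [hf i hi]
    _ = ∑ i ∈ s with P i, f i + ∑ i ∈ s with Q i, f i
          + ∑ i ∈ s with ¬P i ∧ ¬Q i, f i := by
        simp only [sum_add_distrib, sum_filter]
    _ ≤ ∑ i ∈ s with P i, g i + ∑ i ∈ s with Q i, g i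
          + ∑ i ∈ s with ¬P i ∧ ¬Q i, g i :=
        add_le_add (add_le_add hP hQ) hR'
    _ = ∑ i ∈ s, ((if P i then g i else 0) + (if Q i then g i else 0)
          + (if ¬P i ∧ ¬Q i then g i else 0)) := by
        simp only [sum_add_distrib, sum_filter]
    _ ≤ ∑ i ∈ s, 2 * g i :=
        sum_le_sum fun i hi => by split_ifs <;> first | tauto | linarith [hg i hi]
    _ = 2 * ∑ i ∈ s, g i := (mul_sum s g 2).symm

end Finset

theorem stmt_7_general {C S : Type*} [Fintype C] [Fintype S] [DecidableEq C] [DecidableEq S]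
    (E : Finset (C × S)) (κ : C → ℝ) (τ : S → ℝ)
    (x y xt : C × S → ℝ)
    (hx : IsFracMatching E κ τ x)
    (hy : IsFracMatching E κ τ y)
    (hxt : IsFracMatching E κ τ xt)
    (hsat : ∀ e ∈ E, 0 < y e →
      x e + y e ≤ xt e ∨
      (∑ e' ∈ E.filter (fun e' => e'.1 = e.1), xt e') = κ e.1 ∨
      (∑ e' ∈ E.filter (fun e' => e'.2 = e.2), xt e') = τ e.2) :
    ∑ e ∈ E, y e ≤ 2 * ∑ e ∈ E, xt e := by
  set clientSaturated : C → Prop := fun c => ∑ e' ∈ E with e'.1 = c, xt e' = κ c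
  set serverSaturated : S → Prop := fun s => ∑ e' ∈ E with e'.2 = s, xt e' = τ s
  refine Finset.sum_le_two_mul_sum_of_le_on_filters (fun e => clientSaturated e.1)
    (fun e => serverSaturated e.2) (fun e _ => hy.1 e) (fun e _ => hxt.1 e) ?client ?server ?merged
  case client =>
    exact Finset.sum_filter_comp_le_of_fiberwise_le (p := Prod.fst) (T := clientSaturated)
      fun c hc => (hy.2.1 c).trans_eq (Eq.symm hc)
  case server =>
    exact Finset.sum_filter_comp_le_of_fiberwise_le (p := Prod.snd) (T := serverSaturated)
      fun s hs => (hy.2.2 s).trans_eq (Eq.symm hs)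
  case merged =>
    rintro e he ⟨hc, hs⟩
    rcases lt_or_ge 0 (y e) with hpos | hnonpos
    · rcases hsat e he hpos with hmerged | hc' | hs'
      · linarith [hx.1 e]
      · exact absurd hc' hc
      · exact absurd hs' hs
    · exact hnonpos.trans (hxt.1 e)

/-- (MergeInto guarantee.) If `x̃ ≥ x` and every edge carrying positive
`y`-value is either fully merged or blocked at a saturated endpoint, then `2·x̃(E) ≥ y(E)`. -/
theorem stmt_7 {C S : Type*} [Fintype C] [Fintype S] [DecidableEq C] [DecidableEq S]
    (E : Finset (C × S)) (κ : C → ℝ) (hκ : ∀ c, 0 ≤ κ c) (τ : S → ℝ) (hτ : ∀ s, 0 ≤ τ s)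
    (x y xt : C × S → ℝ)
    (hx : IsFracMatching E κ τ x)
    (hy : IsFracMatching E κ τ y)
    (hxt : IsFracMatching E κ τ xt)
    (hge : ∀ e ∈ E, x e ≤ xt e)
    (hsat : ∀ e ∈ E, 0 < y e →
      x e + y e ≤ xt e ∨
      (∑ e' ∈ E.filter (fun e' => e'.1 = e.1), xt e') = κ e.1 ∨
      (∑ e' ∈ E.filter (fun e' => e'.2 = e.2), xt e') = τ e.2) :
    ∑ e ∈ E, y e ≤ 2 * ∑ e ∈ E, xt e :=
  stmt_7_general E κ τ x y xt hx hy hxt hsat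
end

section
/- Let G = (C, S, E) be a finite bipartite graph with capacities κ : C → ℝ≥0 and τ : S → ℝ≥0, and let x be a maximal fractional (κ, τ)-matching, i.e., for every edge cs ∈ E either x(δ(c)) = κ(c) or x(δ(s)) = τ(s). Then for every fractional (κ, τ)-matching y of G, 2·x(E) ≥ y(E). -/
/-!
Call a client (server) saturated if `x` uses its full capacity. By maximality every edge has a
saturated endpoint, so `y(E)` is at most the `y`-weight of the edges at saturated clients plus that
of the edges at saturated servers. At a saturated vertex `y` carries at most the capacity, which
`x` meets exactly; so each of the two parts is at most `x(E)`.
-/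

open Finset

namespace Finset

variable {α β M : Type*} [AddCommMonoid M] [PartialOrder M] [IsOrderedAddMonoid M]

lemma sum_le_sum_filter_add_sum_filter {s : Finset α} {f : α → M} (p q : α → Prop)
    [DecidablePred p] [DecidablePred q] (hf : ∀ a ∈ s, 0 ≤ f a) (hpq : ∀ a ∈ s, p a ∨ q a) :
    ∑ a ∈ s, f a ≤ ∑ a ∈ s with p a, f a + ∑ a ∈ s with q a, f a := by
  rw [← sum_filter_add_sum_filter_not s p f]
  gcongr ∑ a ∈ s with p a, f a + ?_
  refine sum_le_sum_of_subset_of_nonneg (fun a ha => ?_) (fun a ha _ => hf a (mem_filter.1 ha).1)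
  obtain ⟨has, hnp⟩ := mem_filter.1 ha
  exact mem_filter.2 ⟨has, (hpq a has).resolve_left hnp⟩

lemma sum_filter_mem_le_sum_of_fiber_le [DecidableEq β] {s : Finset α} {f g : α → M}
    (π : α → β) (t : Finset β) (hg : ∀ a ∈ s, 0 ≤ g a)
    (hfg : ∀ b ∈ t, ∑ a ∈ s with π a = b, f a ≤ ∑ a ∈ s with π a = b, g a) :
    ∑ a ∈ s with π a ∈ t, f a ≤ ∑ a ∈ s, g a :=
  calc ∑ a ∈ s with π a ∈ t, f a
      = ∑ b ∈ t, ∑ a ∈ s with π a = b, f a := (sum_fiberwise_eq_sum_filter s t π f).symm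
    _ ≤ ∑ b ∈ t, ∑ a ∈ s with π a = b, g a := sum_le_sum hfg
    _ = ∑ a ∈ s with π a ∈ t, g a := sum_fiberwise_eq_sum_filter s t π g
    _ ≤ ∑ a ∈ s, g a :=
      sum_le_sum_of_subset_of_nonneg (filter_subset _ s) fun a ha _ => hg a ha

end Finset

theorem stmt_8_general {C S : Type*} [Fintype C] [Fintype S] [DecidableEq C] [DecidableEq S]
    (E : Finset (C × S)) (κ : C → ℝ) (τ : S → ℝ)
    (x : C × S → ℝ)
    (hx : IsFracMatching E κ τ x)
    (hmaximal : ∀ e ∈ E,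
      (∑ e' ∈ E.filter (fun e' => e'.1 = e.1), x e') = κ e.1 ∨
      (∑ e' ∈ E.filter (fun e' => e'.2 = e.2), x e') = τ e.2) :
    ∀ y : C × S → ℝ, IsFracMatching E κ τ y → ∑ e ∈ E, y e ≤ 2 * ∑ e ∈ E, x e := by
  classical
  rintro y ⟨hy_nonneg, hy_client, hy_server⟩
  have hx_nonneg : ∀ e ∈ E, 0 ≤ x e := fun e _ => hx.1 e
  let saturatedClients : Finset C := {c | ∑ e ∈ E with e.1 = c, x e = κ c}
  let saturatedServers : Finset S := {s | ∑ e ∈ E with e.2 = s, x e = τ s}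
  have h_client : ∑ e ∈ E with e.1 ∈ saturatedClients, y e ≤ ∑ e ∈ E, x e :=
    sum_filter_mem_le_sum_of_fiber_le Prod.fst _ hx_nonneg fun c hc =>
      (hy_client c).trans_eq (mem_filter.1 hc).2.symm
  have h_server : ∑ e ∈ E with e.2 ∈ saturatedServers, y e ≤ ∑ e ∈ E, x e :=
    sum_filter_mem_le_sum_of_fiber_le Prod.snd _ hx_nonneg fun s hs =>
      (hy_server s).trans_eq (mem_filter.1 hs).2.symm
  have h_cover := sum_le_sum_filter_add_sum_filter (s := E) (f := y)
    (fun e => e.1 ∈ saturatedClients) (fun e => e.2 ∈ saturatedServers)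
    (fun e _ => hy_nonneg e) fun e he => by
      simpa [saturatedClients, saturatedServers] using hmaximal e he
  linarith

/-- A maximal fractional `(κ, τ)`-matching is `2`-approximate:
for every fractional `(κ, τ)`-matching `y`, `2·x(E) ≥ y(E)`. -/
theorem stmt_8 {C S : Type*} [Fintype C] [Fintype S] [DecidableEq C] [DecidableEq S]
    (E : Finset (C × S)) (κ : C → ℝ) (hκ : ∀ c, 0 ≤ κ c) (τ : S → ℝ) (hτ : ∀ s, 0 ≤ τ s)
    (x : C × S → ℝ)
    (hx : IsFracMatching E κ τ x)
    (hmaximal : ∀ e ∈ E,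
      (∑ e' ∈ E.filter (fun e' => e'.1 = e.1), x e') = κ e.1 ∨
      (∑ e' ∈ E.filter (fun e' => e'.2 = e.2), x e') = τ e.2) :
    ∀ y : C × S → ℝ, IsFracMatching E κ τ y → ∑ e ∈ E, y e ≤ 2 * ∑ e ∈ E, x e :=
  stmt_8_general E κ τ x hx hmaximal
end

section
/- Let ℓ be a natural number, α > 0 and p ≥ 1 real numbers, and let u_0 ≤ u_1 ≤ ⋯ ≤ u_ℓ and v_0 ≤ v_1 ≤ ⋯ ≤ v_ℓ be nonnegative reals such that α·(u_ℓ − u_i) ≤ v_ℓ − v_i for every i ∈ {0, …, ℓ−1} and α·u_ℓ ≤ v_ℓ. Then p·u_0 + ∑_{i=1}^{ℓ} p·2^{i(p−1)}·(u_i − u_{i−1}) ≤ (2^p/α)·(v_0 + ∑_{i=1}^{ℓ} p·2^{(i−1)(p−1)}·(v_i − v_{i−1})). -/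
/-!
With `X = 2^(p-1)` and the increasing weights `w₀ = 1`, `wᵢ = p X^(i-1)` (`dyadicWeight`),
put `F(u) = u₀ + ∑ wᵢ (uᵢ - uᵢ₋₁)`. Since `p ≤ 2^p` and the increments of `u` are
nonnegative, the left-hand side is at most `2^p F(u)`.
Abel summation rewrites `F(u) = w₀ u_ℓ + ∑_{i<ℓ} (wᵢ₊₁ - wᵢ)(u_ℓ - uᵢ)`, a nonnegative
combination of `u_ℓ` and the gaps `u_ℓ - uᵢ`, so the hypotheses give `α F(u) ≤ F(v)`.
-/

open Finset

def incrementSum (c u : ℕ → ℝ) (n : ℕ) : ℝ :=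
  c 0 * u 0 + ∑ i ∈ Icc 1 n, c i * (u i - u (i - 1))

lemma incrementSum_eq_abel (c u : ℕ → ℝ) (n : ℕ) :
    incrementSum c u n = c 0 * u n + ∑ i ∈ range n, (c (i + 1) - c i) * (u n - u i) := by
  have abel : incrementSum c u n = c n * u n - ∑ i ∈ range n, (c (i + 1) - c i) * u i := by
    induction n with
    | zero => simp [incrementSum]
    | succ n ih =>
      unfold incrementSum at ih ⊢
      rw [sum_Icc_succ_top (by omega), ← add_assoc, ih, sum_range_succ, Nat.add_sub_cancel]
      ring
  rw [abel]
  simp only [mul_sub, sum_sub_distrib]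
  rw [← sum_mul, sum_range_sub]
  ring

lemma incrementSum_mul_left (k : ℝ) (c u : ℕ → ℝ) (n : ℕ) :
    incrementSum (fun i => k * c i) u n = k * incrementSum c u n := by
  simp only [incrementSum, mul_add, mul_sum, mul_assoc]

lemma incrementSum_le_of_weight_le {c d u : ℕ → ℝ} {n : ℕ} (hu₀ : 0 ≤ u 0)
    (hu : ∀ i < n, u i ≤ u (i + 1)) (hcd : ∀ i ≤ n, c i ≤ d i) :
    incrementSum c u n ≤ incrementSum d u n := by
  refine add_le_add (mul_le_mul_of_nonneg_right (hcd 0 n.zero_le) hu₀) (sum_le_sum fun i hi => ?_)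
  obtain ⟨hi₁, hin⟩ := mem_Icc.mp hi
  have hstep : u (i - 1) ≤ u i := by
    simpa [Nat.sub_add_cancel hi₁] using hu (i - 1) (by omega)
  exact mul_le_mul_of_nonneg_right (hcd i hin) (sub_nonneg.mpr hstep)

lemma mul_incrementSum_le {c u v : ℕ → ℝ} {n : ℕ} (α : ℝ) (hc₀ : 0 ≤ c 0)
    (hc : ∀ i < n, c i ≤ c (i + 1)) (hn : α * u n ≤ v n)
    (hgap : ∀ i < n, α * (u n - u i) ≤ v n - v i) :
    α * incrementSum c u n ≤ incrementSum c v n := by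
  rw [incrementSum_eq_abel, incrementSum_eq_abel, mul_add, mul_sum]
  refine add_le_add ?_ (sum_le_sum fun i hi => ?_)
  · rw [mul_left_comm]
    exact mul_le_mul_of_nonneg_left hn hc₀
  · rw [mul_left_comm]
    exact mul_le_mul_of_nonneg_left (hgap i (mem_range.mp hi))
      (sub_nonneg.mpr (hc i (mem_range.mp hi)))

lemma self_le_two_rpow {p : ℝ} (hp : 1 ≤ p) : p ≤ (2 : ℝ) ^ p := by
  have := one_add_mul_self_le_rpow_one_add (s := 1) (by norm_num) hp
  norm_num at this
  linarith

noncomputable def dyadicWeight (p : ℝ) (i : ℕ) : ℝ :=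
  if i = 0 then 1 else p * (2 : ℝ) ^ (((i : ℝ) - 1) * (p - 1))

lemma dyadicWeight_succ (p : ℝ) (i : ℕ) :
    dyadicWeight p (i + 1) = p * (2 : ℝ) ^ ((i : ℝ) * (p - 1)) := by
  simp [dyadicWeight]

lemma dyadicWeight_le_succ {p : ℝ} (hp : 1 ≤ p) (i : ℕ) :
    dyadicWeight p i ≤ dyadicWeight p (i + 1) := by
  rcases i with _ | i
  · simp [dyadicWeight, hp]
  · rw [dyadicWeight_succ, dyadicWeight_succ]
    gcongr
    · exact one_le_two
    · nlinarith

lemma mul_two_rpow_le_two_rpow_mul_dyadicWeight {p : ℝ} (hp : 1 ≤ p) (i : ℕ) :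
    p * (2 : ℝ) ^ ((i : ℝ) * (p - 1)) ≤ 2 ^ p * dyadicWeight p i := by
  rcases i with _ | i
  · simpa [dyadicWeight] using self_le_two_rpow hp
  · rw [dyadicWeight_succ, show ((i + 1 : ℕ) : ℝ) * (p - 1) = (i : ℝ) * (p - 1) + (p - 1) by
      push_cast; ring, Real.rpow_add two_pos, ← mul_assoc, mul_comm _ ((2 : ℝ) ^ (p - 1))]
    gcongr
    · exact one_le_two
    · linarith

theorem stmt_10_general (ℓ : ℕ) (α p : ℝ) (hα : 0 < α) (hp : 1 ≤ p)
    (u v : ℕ → ℝ)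
    (hunn : ∀ i ≤ ℓ, 0 ≤ u i)
    (humono : ∀ i < ℓ, u i ≤ u (i + 1))
    (hrel : ∀ i < ℓ, α * (u ℓ - u i) ≤ v ℓ - v i)
    (hrelℓ : α * u ℓ ≤ v ℓ) :
    p * u 0 + ∑ i ∈ Finset.Icc 1 ℓ, p * (2 : ℝ) ^ ((i : ℝ) * (p - 1)) * (u i - u (i - 1))
      ≤ (2 : ℝ) ^ p / α *
        (v 0 + ∑ i ∈ Finset.Icc 1 ℓ,
          p * (2 : ℝ) ^ (((i : ℝ) - 1) * (p - 1)) * (v i - v (i - 1))) := by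
  have hv : v 0 + ∑ i ∈ Icc 1 ℓ, p * (2 : ℝ) ^ (((i : ℝ) - 1) * (p - 1)) * (v i - v (i - 1))
      = incrementSum (dyadicWeight p) v ℓ := by
    refine congrArg₂ _ (by simp [dyadicWeight]) (sum_congr rfl fun i hi => ?_)
    simp [dyadicWeight, Nat.one_le_iff_ne_zero.mp (mem_Icc.mp hi).1]
  calc _ = incrementSum (fun i => p * (2 : ℝ) ^ ((i : ℝ) * (p - 1))) u ℓ := by simp [incrementSum]
    _ ≤ incrementSum (fun i => 2 ^ p * dyadicWeight p i) u ℓ :=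
      incrementSum_le_of_weight_le (hunn 0 ℓ.zero_le) humono
        fun i _ => mul_two_rpow_le_two_rpow_mul_dyadicWeight hp i
    _ = 2 ^ p * incrementSum (dyadicWeight p) u ℓ := incrementSum_mul_left _ _ _ _
    _ ≤ 2 ^ p * (incrementSum (dyadicWeight p) v ℓ / α) := by
      gcongr
      rw [le_div_iff₀' hα]
      exact mul_incrementSum_le α (by simp [dyadicWeight])
        (fun i _ => dyadicWeight_le_succ hp i) hrelℓ hrel
    _ = _ := by rw [hv]; ring

/-- Comparison of the telescoping upper and lower bound expressions:
if `α·(u_ℓ − u_i) ≤ v_ℓ − v_i` for all `i < ℓ` and `α·u_ℓ ≤ v_ℓ`, then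
`p·u_0 + ∑ p·2^{i(p−1)}(u_i − u_{i−1}) ≤ (2^p/α)·(v_0 + ∑ p·2^{(i−1)(p−1)}(v_i − v_{i−1}))`. -/
theorem stmt_10 (ℓ : ℕ) (α p : ℝ) (hα : 0 < α) (hp : 1 ≤ p)
    (u v : ℕ → ℝ)
    (hunn : ∀ i ≤ ℓ, 0 ≤ u i) (hvnn : ∀ i ≤ ℓ, 0 ≤ v i)
    (humono : ∀ i < ℓ, u i ≤ u (i + 1)) (hvmono : ∀ i < ℓ, v i ≤ v (i + 1))
    (hrel : ∀ i < ℓ, α * (u ℓ - u i) ≤ v ℓ - v i)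
    (hrelℓ : α * u ℓ ≤ v ℓ) :
    p * u 0 + ∑ i ∈ Finset.Icc 1 ℓ, p * (2 : ℝ) ^ ((i : ℝ) * (p - 1)) * (u i - u (i - 1))
      ≤ (2 : ℝ) ^ p / α *
        (v 0 + ∑ i ∈ Finset.Icc 1 ℓ,
          p * (2 : ℝ) ^ (((i : ℝ) - 1) * (p - 1)) * (v i - v (i - 1))) :=
  stmt_10_general ℓ α p hα hp u v hunn humono hrel hrelℓ
end

section
/- Let G = (C, S, E) be a finite bipartite graph with client weights w : C → ℤ>0, let ℓ be a natural number, let (x_0, …, x_ℓ) be a fractional (w, 2^i)-nested matching hierarchy on G, and let (x*_0, …, x*_ℓ) be a maximally-nested integral fractional (w, 2^i)-nested matching hierarchy on G. Let α > 0 be a real number, and suppose α·(x_ℓ − x_i)(E) ≤ (x*_ℓ − x*_i)(E) for every i ∈ {0, …, ℓ−1} and α·x_ℓ(E) ≤ x*_ℓ(E). Then for every real p ≥ 1, ∑_{s∈S} x_ℓ(δ(s))^p ≤ (2^p/α)·∑_{s∈S} x*_ℓ(δ(s))^p. -/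
open Finset Set

/-!
Let `F` be the piecewise-linear interpolant of `y ↦ y ^ p` at `0, 1, 2, 4, …, 2 ^ ℓ`. By convexity
`y ^ p ≤ F y` on `[0, 2 ^ ℓ]`, and by monotonicity `F y ≤ (2 y) ^ p` for `y ≥ 1`. Written as a
combination of hinges `max (y - 2 ^ i) 0` with nonnegative coefficients, `∑ₛ F (x(δ s))` is a
nonnegative combination of the total size and the total excesses `∑ₛ max (x(δ s) - 2 ^ i) 0`.
In a nested hierarchy this excess is at most `(x_ℓ - x_i)(δ s)`, and in a maximally-nested one it
equals it, so the size hypotheses give `α ∑ₛ F (x_ℓ(δ s)) ≤ ∑ₛ F (x*_ℓ(δ s))`. Integrality puts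
each `x*_ℓ(δ s)` in `{0} ∪ [1, ∞)`, where `F` is at most `(2 y) ^ p`.
-/

lemma ConvexOn.le_add_slope_mul {s : Set ℝ} {f : ℝ → ℝ} (hf : ConvexOn ℝ s f) {a b y : ℝ}
    (ha : a ∈ s) (hb : b ∈ s) (hay : a ≤ y) (hyb : y ≤ b) :
    f y ≤ f a + slope f a b * (y - a) := by
  rcases hay.eq_or_lt with rfl | hay
  · simp
  have hy : y ∈ s := hf.1.ordConnected.out ha hb ⟨hay.le, hyb⟩
  have hslope : slope f a y ≤ slope f a b :=
    hf.slope_mono ha ⟨hy, hay.ne'⟩ ⟨hb, (hay.trans_le hyb).ne'⟩ hyb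
  have hfy : f y = f a + slope f a y * (y - a) := by
    rw [slope_def_field]; field_simp [(sub_pos.2 hay).ne']; ring
  rw [hfy]
  gcongr

def dyadicNode : ℕ → ℝ
  | 0 => 0
  | i + 1 => 2 ^ i

@[simp] lemma dyadicNode_zero : dyadicNode 0 = 0 := rfl

@[simp] lemma dyadicNode_succ (i : ℕ) : dyadicNode (i + 1) = 2 ^ i := rfl

lemma dyadicNode_nonneg (i : ℕ) : 0 ≤ dyadicNode i := by
  cases i <;> simp

lemma dyadicNode_strictMono : StrictMono dyadicNode :=
  strictMono_nat_of_lt_succ fun i => by cases i <;> simp [pow_succ]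

lemma dyadicNode_succ_le_two_mul {k : ℕ} {y : ℝ} (hy : 1 ≤ y) (hk : dyadicNode k ≤ y) :
    dyadicNode (k + 1) ≤ 2 * y := by
  cases k with
  | zero => rw [zero_add, dyadicNode_succ, pow_zero]; linarith
  | succ k => simp only [dyadicNode_succ] at hk ⊢; rw [pow_succ]; linarith

section Interpolation

variable {φ : ℝ → ℝ} {n k : ℕ} {y : ℝ}

noncomputable def dyadicSlope (φ : ℝ → ℝ) (i : ℕ) : ℝ :=
  slope φ (dyadicNode i) (dyadicNode (i + 1))

lemma add_dyadicSlope_mul (φ : ℝ → ℝ) (k : ℕ) :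
    φ (dyadicNode k) + dyadicSlope φ k * (dyadicNode (k + 1) - dyadicNode k) =
      φ (dyadicNode (k + 1)) := by
  have := sub_smul_slope φ (dyadicNode k) (dyadicNode (k + 1))
  rw [smul_eq_mul, vsub_eq_sub] at this
  rw [dyadicSlope, mul_comm, this]
  ring

lemma dyadicSlope_nonneg (hφ : MonotoneOn φ (Ici 0)) (i : ℕ) : 0 ≤ dyadicSlope φ i :=
  hφ.slope_nonneg (dyadicNode_nonneg i) (dyadicNode_nonneg (i + 1))

lemma ConvexOn.dyadicSlope_mono (hφ : ConvexOn ℝ (Ici 0) φ) : Monotone (dyadicSlope φ) :=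
  monotone_nat_of_le_succ fun i => by
    simpa only [dyadicSlope, slope_def_field] using
      hφ.slope_mono_adjacent (dyadicNode_nonneg i) (dyadicNode_nonneg (i + 2))
        (dyadicNode_strictMono i.lt_succ_self) (dyadicNode_strictMono (i + 1).lt_succ_self)

/-- The piecewise-linear interpolant of `φ` at the nodes `0, 1, 2, …, 2 ^ n` (and linear beyond),
written as a sum of hinges. -/
noncomputable def dyadicInterp (φ : ℝ → ℝ) (n : ℕ) (y : ℝ) : ℝ :=
  φ 0 + dyadicSlope φ 0 * y +
    ∑ i ∈ range n, (dyadicSlope φ (i + 1) - dyadicSlope φ i) * max (y - 2 ^ i) 0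

lemma dyadicInterp_succ (φ : ℝ → ℝ) (n : ℕ) (y : ℝ) :
    dyadicInterp φ (n + 1) y =
      dyadicInterp φ n y + (dyadicSlope φ (n + 1) - dyadicSlope φ n) * max (y - 2 ^ n) 0 := by
  simp only [dyadicInterp, sum_range_succ, add_assoc]

lemma dyadicInterp_succ_of_le (hy : y ≤ 2 ^ n) : dyadicInterp φ (n + 1) y = dyadicInterp φ n y := by
  rw [dyadicInterp_succ, max_eq_right (by linarith), mul_zero, add_zero]

lemma dyadicInterp_zero_right (φ : ℝ → ℝ) (n : ℕ) : dyadicInterp φ n 0 = φ 0 := by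
  induction n with
  | zero => simp [dyadicInterp]
  | succ n ih => rw [dyadicInterp_succ_of_le (by positivity), ih]

lemma dyadicInterp_of_dyadicNode_le (hy : dyadicNode k ≤ y) :
    dyadicInterp φ k y = φ (dyadicNode k) + dyadicSlope φ k * (y - dyadicNode k) := by
  induction k with
  | zero => simp [dyadicInterp]
  | succ k ih =>
    rw [dyadicInterp_succ, ih ((dyadicNode_strictMono k.lt_succ_self).le.trans hy),
      ← add_dyadicSlope_mul φ k]
    rw [dyadicNode_succ] at hy ⊢
    rw [max_eq_left (sub_nonneg.2 hy)]
    ring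

lemma exists_dyadicInterp_eq (hy0 : 0 ≤ y) (hy : y ≤ 2 ^ n) :
    ∃ k, dyadicNode k ≤ y ∧ y ≤ dyadicNode (k + 1) ∧
      dyadicInterp φ n y = φ (dyadicNode k) + dyadicSlope φ k * (y - dyadicNode k) := by
  induction n with
  | zero => exact ⟨0, hy0, by simpa using hy, dyadicInterp_of_dyadicNode_le hy0⟩
  | succ n ih =>
    rcases le_or_gt y (2 ^ n) with h | h
    · rw [dyadicInterp_succ_of_le h]
      exact ih h
    · exact ⟨n + 1, h.le, hy, dyadicInterp_of_dyadicNode_le h.le⟩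

lemma ConvexOn.le_dyadicInterp (hφ : ConvexOn ℝ (Ici 0) φ) (hy0 : 0 ≤ y) (hy : y ≤ 2 ^ n) :
    φ y ≤ dyadicInterp φ n y := by
  obtain ⟨k, hk, hk', heq⟩ := exists_dyadicInterp_eq (φ := φ) hy0 hy
  rw [heq]
  exact hφ.le_add_slope_mul (dyadicNode_nonneg k) (dyadicNode_nonneg (k + 1)) hk hk'

lemma MonotoneOn.dyadicInterp_le (hφ : MonotoneOn φ (Ici 0)) (hy1 : 1 ≤ y) (hy : y ≤ 2 ^ n) :
    dyadicInterp φ n y ≤ φ (2 * y) := by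
  obtain ⟨k, hk, hk', heq⟩ := exists_dyadicInterp_eq (φ := φ) (by linarith) hy
  have := dyadicSlope_nonneg hφ k
  calc dyadicInterp φ n y = φ (dyadicNode k) + dyadicSlope φ k * (y - dyadicNode k) := heq
    _ ≤ φ (dyadicNode k) + dyadicSlope φ k * (dyadicNode (k + 1) - dyadicNode k) := by gcongr
    _ = φ (dyadicNode (k + 1)) := add_dyadicSlope_mul φ k
    _ ≤ φ (2 * y) :=
      hφ (dyadicNode_nonneg _) (show 0 ≤ 2 * y by linarith)
        (dyadicNode_succ_le_two_mul hy1 hk)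

lemma sum_dyadicInterp {ι : Type*} [Fintype ι] (hφ0 : φ 0 = 0) (n : ℕ) (f : ι → ℝ) :
    ∑ s, dyadicInterp φ n (f s) = dyadicSlope φ 0 * ∑ s, f s +
      ∑ i ∈ range n, (dyadicSlope φ (i + 1) - dyadicSlope φ i) * ∑ s, max (f s - 2 ^ i) 0 := by
  simp only [dyadicInterp, hφ0, zero_add, sum_add_distrib, mul_sum]
  rw [sum_comm]

end Interpolation

section MaximallyNested

variable {m : ℕ → ℝ} {ℓ : ℕ}

lemma le_of_forall_le_succ (hm : ∀ i < ℓ, m i ≤ m (i + 1)) {i : ℕ} (hi : i ≤ ℓ) : m i ≤ m ℓ := by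
  induction ℓ, hi using Nat.le_induction with
  | base => rfl
  | succ j hij ih => exact (ih fun k hk => hm k (by omega)).trans (hm j j.lt_succ_self)

lemma eq_of_lt_two_pow_of_maximallyNested (hmax : ∀ i < ℓ, m (i + 1) ≠ m i → m i = 2 ^ i)
    {i j : ℕ} (hi : m i < 2 ^ i) (hij : i ≤ j) (hj : j ≤ ℓ) : m j = m i := by
  induction j, hij using Nat.le_induction with
  | base => rfl
  | succ j hij ih =>
    have hmj : m j = m i := ih (by omega)
    have hne : m j ≠ 2 ^ j := by
      rw [hmj]
      exact (hi.trans_le (pow_le_pow_right₀ one_le_two hij)).ne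
    rw [← hmj]
    exact not_not.1 (mt (hmax j (by omega)) hne)

lemma sub_eq_max_of_maximallyNested (hcap : ∀ i ≤ ℓ, m i ≤ 2 ^ i)
    (hmono : ∀ i < ℓ, m i ≤ m (i + 1)) (hmax : ∀ i < ℓ, m (i + 1) ≠ m i → m i = 2 ^ i)
    {i : ℕ} (hi : i ≤ ℓ) : m ℓ - m i = max (m ℓ - 2 ^ i) 0 := by
  rcases (hcap i hi).lt_or_eq with hlt | heq
  · rw [eq_of_lt_two_pow_of_maximallyNested hmax hlt hi le_rfl, sub_self,
      max_eq_right (by linarith)]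
  · rw [heq, max_eq_left (by linarith [le_of_forall_le_succ hmono hi])]

end MaximallyNested

section Hierarchy

variable {S : Type*} [Fintype S] {φ : ℝ → ℝ} {ℓ : ℕ}

lemma sum_dyadicInterp_le_of_nested (hφ : ConvexOn ℝ (Ici 0) φ) (hφ0 : φ 0 = 0)
    {L : ℕ → S → ℝ} (hLcap : ∀ i ≤ ℓ, ∀ s, L i s ≤ 2 ^ i)
    (hLmono : ∀ i < ℓ, ∀ s, L i s ≤ L (i + 1) s) :
    ∑ s, dyadicInterp φ ℓ (L ℓ s) ≤ dyadicSlope φ 0 * ∑ s, L ℓ s +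
      ∑ i ∈ range ℓ, (dyadicSlope φ (i + 1) - dyadicSlope φ i) * ∑ s, (L ℓ s - L i s) := by
  rw [sum_dyadicInterp hφ0]
  gcongr with i hi s
  · exact sub_nonneg.2 (hφ.dyadicSlope_mono i.le_succ)
  · have hi : i < ℓ := mem_range.1 hi
    exact max_le (by linarith [hLcap i hi.le s])
      (sub_nonneg.2 (le_of_forall_le_succ (fun j hj => hLmono j hj s) hi.le))

lemma sum_dyadicInterp_eq_of_maximallyNested (hφ0 : φ 0 = 0) {M : ℕ → S → ℝ}
    (hMcap : ∀ i ≤ ℓ, ∀ s, M i s ≤ 2 ^ i) (hMmono : ∀ i < ℓ, ∀ s, M i s ≤ M (i + 1) s)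
    (hMmax : ∀ i < ℓ, ∀ s, M (i + 1) s ≠ M i s → M i s = 2 ^ i) :
    ∑ s, dyadicInterp φ ℓ (M ℓ s) = dyadicSlope φ 0 * ∑ s, M ℓ s +
      ∑ i ∈ range ℓ, (dyadicSlope φ (i + 1) - dyadicSlope φ i) * ∑ s, (M ℓ s - M i s) := by
  rw [sum_dyadicInterp hφ0]
  congr 1
  refine sum_congr rfl fun i hi => ?_
  simp only [sub_eq_max_of_maximallyNested (fun j hj => hMcap j hj _)
    (fun j hj => hMmono j hj _) (fun j hj => hMmax j hj _) (mem_range.1 hi).le]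

theorem mul_sum_le_sum_two_mul_of_maximallyNested (hφ : ConvexOn ℝ (Ici 0) φ)
    (hφm : MonotoneOn φ (Ici 0)) (hφ0 : φ 0 = 0) {L M : ℕ → S → ℝ}
    (hL0 : ∀ s, 0 ≤ L ℓ s) (hLcap : ∀ i ≤ ℓ, ∀ s, L i s ≤ 2 ^ i)
    (hLmono : ∀ i < ℓ, ∀ s, L i s ≤ L (i + 1) s)
    (hMcap : ∀ i ≤ ℓ, ∀ s, M i s ≤ 2 ^ i) (hMmono : ∀ i < ℓ, ∀ s, M i s ≤ M (i + 1) s)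
    (hMmax : ∀ i < ℓ, ∀ s, M (i + 1) s ≠ M i s → M i s = 2 ^ i)
    (hMint : ∀ s, M ℓ s = 0 ∨ 1 ≤ M ℓ s)
    {α : ℝ} (hα : 0 ≤ α) (hrel : ∀ i < ℓ, α * ∑ s, (L ℓ s - L i s) ≤ ∑ s, (M ℓ s - M i s))
    (hrelℓ : α * ∑ s, L ℓ s ≤ ∑ s, M ℓ s) :
    α * ∑ s, φ (L ℓ s) ≤ ∑ s, φ (2 * M ℓ s) := by
  set σ := dyadicSlope φ
  have hσ0 : 0 ≤ σ 0 := dyadicSlope_nonneg hφm 0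
  have hσ : ∀ i, 0 ≤ σ (i + 1) - σ i := fun i => sub_nonneg.2 (hφ.dyadicSlope_mono i.le_succ)
  calc α * ∑ s, φ (L ℓ s) ≤ α * ∑ s, dyadicInterp φ ℓ (L ℓ s) := by
        gcongr with s
        exact hφ.le_dyadicInterp (hL0 s) (hLcap ℓ le_rfl s)
    _ ≤ α * (σ 0 * ∑ s, L ℓ s + ∑ i ∈ range ℓ, (σ (i + 1) - σ i) * ∑ s, (L ℓ s - L i s)) := by
        gcongr
        exact sum_dyadicInterp_le_of_nested hφ hφ0 hLcap hLmono
    _ = σ 0 * (α * ∑ s, L ℓ s) +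
          ∑ i ∈ range ℓ, (σ (i + 1) - σ i) * (α * ∑ s, (L ℓ s - L i s)) := by
        rw [mul_add, mul_left_comm, mul_sum (range ℓ)]
        exact congrArg _ (sum_congr rfl fun i _ => mul_left_comm _ _ _)
    _ ≤ σ 0 * ∑ s, M ℓ s + ∑ i ∈ range ℓ, (σ (i + 1) - σ i) * ∑ s, (M ℓ s - M i s) := by
        gcongr with i hi
        · exact hσ i
        · exact hrel i (mem_range.1 hi)
    _ = ∑ s, dyadicInterp φ ℓ (M ℓ s) :=
        (sum_dyadicInterp_eq_of_maximallyNested hφ0 hMcap hMmono hMmax).symm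
    _ ≤ ∑ s, φ (2 * M ℓ s) := by
        gcongr with s
        rcases hMint s with h | h
        · rw [h, mul_zero, dyadicInterp_zero_right]
        · exact hφm.dyadicInterp_le h (hMcap ℓ le_rfl s)

end Hierarchy

section ServerLoad

variable {C S : Type*} [DecidableEq S] (E : Finset (C × S))

-- `serverLoad E x s` is the paper's `x(δ(s))`.
def serverLoad (x : C × S → ℝ) (s : S) : ℝ :=
  ∑ e ∈ E.filter (fun e => e.2 = s), x e

variable {E}

lemma serverLoad_nonneg {x : C × S → ℝ} (hx : ∀ e, 0 ≤ x e) (s : S) : 0 ≤ serverLoad E x s :=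
  sum_nonneg fun e _ => hx e

lemma serverLoad_mono {x y : C × S → ℝ} (hxy : ∀ e, x e ≤ y e) (s : S) :
    serverLoad E x s ≤ serverLoad E y s :=
  sum_le_sum fun e _ => hxy e

lemma serverLoad_eq_zero_or_one_le {x : C × S → ℝ} (hx : ∀ e, 0 ≤ x e)
    (hint : ∀ e, ∃ n : ℤ, x e = n) (s : S) : serverLoad E x s = 0 ∨ 1 ≤ serverLoad E x s := by
  choose n hn using hint
  have hcast : serverLoad E x s = ((∑ e ∈ E.filter (fun e => e.2 = s), n e : ℤ) : ℝ) := by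
    push_cast
    exact sum_congr rfl fun e _ => hn e
  have hnonneg := serverLoad_nonneg (E := E) hx s
  rw [hcast] at hnonneg ⊢
  rcases (show (0 : ℤ) ≤ _ by exact_mod_cast hnonneg).eq_or_lt with h | h
  · left; rw [← h, Int.cast_zero]
  · right; exact_mod_cast h

variable [Fintype S]

lemma sum_serverLoad (x : C × S → ℝ) : ∑ s, serverLoad E x s = ∑ e ∈ E, x e :=
  sum_fiberwise E Prod.snd x

lemma sum_serverLoad_sub (x y : C × S → ℝ) :
    ∑ s, (serverLoad E x s - serverLoad E y s) = ∑ e ∈ E, (x e - y e) := by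
  rw [sum_sub_distrib, sum_serverLoad, sum_serverLoad, sum_sub_distrib]

end ServerLoad

theorem stmt_11_general {C S : Type*} [Fintype S] [DecidableEq S]
    (E : Finset (C × S))
    (ℓ : ℕ) (x xs : ℕ → C × S → ℝ)
    -- (x_0, …, x_ℓ) is a fractional (w, 2^i)-NMH
    (hxnn : ∀ i ≤ ℓ, ∀ e, 0 ≤ x i e)
    (hxserver : ∀ i ≤ ℓ, ∀ s : S, ∑ e ∈ E.filter (fun e => e.2 = s), x i e ≤ 2 ^ i)
    (hxnested : ∀ i, 1 ≤ i → i ≤ ℓ → ∀ e, x (i - 1) e ≤ x i e)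
    -- (x*_0, …, x*_ℓ) is a maximally-nested integral fractional (w, 2^i)-NMH
    (hxsnn : ∀ i ≤ ℓ, ∀ e, 0 ≤ xs i e)
    (hxsserver : ∀ i ≤ ℓ, ∀ s : S, ∑ e ∈ E.filter (fun e => e.2 = s), xs i e ≤ 2 ^ i)
    (hxsnested : ∀ i, 1 ≤ i → i ≤ ℓ → ∀ e, xs (i - 1) e ≤ xs i e)
    (hxsintegral : ∀ i ≤ ℓ, ∀ e, ∃ n : ℤ, xs i e = (n : ℝ))
    (hxsmaxnested : ∀ i < ℓ, ∀ s : S,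
      (∑ e ∈ E.filter (fun e => e.2 = s), xs (i + 1) e) ≠
          (∑ e ∈ E.filter (fun e => e.2 = s), xs i e) →
        (∑ e ∈ E.filter (fun e => e.2 = s), xs i e) = 2 ^ i)
    -- relative-size hypotheses
    (α : ℝ) (hα : 0 < α)
    (hrel : ∀ i < ℓ, α * (∑ e ∈ E, (x ℓ e - x i e)) ≤ ∑ e ∈ E, (xs ℓ e - xs i e))
    (hrelℓ : α * (∑ e ∈ E, x ℓ e) ≤ ∑ e ∈ E, xs ℓ e)
    (p : ℝ) (hp : 1 ≤ p) :
    ∑ s : S, (∑ e ∈ E.filter (fun e => e.2 = s), x ℓ e) ^ p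
      ≤ (2 : ℝ) ^ p / α *
        ∑ s : S, (∑ e ∈ E.filter (fun e => e.2 = s), xs ℓ e) ^ p := by
  have key := mul_sum_le_sum_two_mul_of_maximallyNested (φ := fun y => y ^ p) (convexOn_rpow hp)
    (Real.monotoneOn_rpow_Ici_of_exponent_nonneg (by linarith)) (Real.zero_rpow (by linarith))
    (L := fun i => serverLoad E (x i)) (M := fun i => serverLoad E (xs i))
    (serverLoad_nonneg (hxnn ℓ le_rfl)) hxserver
    (fun i hi => serverLoad_mono fun e => by simpa using hxnested (i + 1) (by omega) hi e)
    hxsserver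
    (fun i hi => serverLoad_mono fun e => by simpa using hxsnested (i + 1) (by omega) hi e)
    hxsmaxnested (serverLoad_eq_zero_or_one_le (hxsnn ℓ le_rfl) (hxsintegral ℓ le_rfl)) hα.le
    (fun i hi => by simpa only [sum_serverLoad_sub] using hrel i hi)
    (by simpa only [sum_serverLoad] using hrelℓ)
  have hscale : ∀ s, (2 * serverLoad E (xs ℓ) s) ^ p = 2 ^ p * serverLoad E (xs ℓ) s ^ p :=
    fun s => Real.mul_rpow zero_le_two (serverLoad_nonneg (hxsnn ℓ le_rfl) s)
  simp only [hscale, ← mul_sum] at key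
  rw [div_mul_eq_mul_div, le_div_iff₀ hα, mul_comm]
  exact key

/-- If a fractional `(w, 2^i)`-NMH `(x_0, …, x_ℓ)` is `α`-related in size
to a maximally-nested integral `(w, 2^i)`-NMH `(x*_0, …, x*_ℓ)`, then
`∑_s x_ℓ(δ(s))^p ≤ (2^p/α)·∑_s x*_ℓ(δ(s))^p` for every real `p ≥ 1`. -/
theorem stmt_11 {C S : Type*} [Fintype C] [Fintype S] [DecidableEq C] [DecidableEq S]
    (E : Finset (C × S)) (w : C → ℤ) (hw : ∀ c, 0 < w c)
    (ℓ : ℕ) (x xs : ℕ → C × S → ℝ)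
    -- (x_0, …, x_ℓ) is a fractional (w, 2^i)-NMH
    (hxnn : ∀ i ≤ ℓ, ∀ e, 0 ≤ x i e)
    (hxclient : ∀ i ≤ ℓ, ∀ c : C, ∑ e ∈ E.filter (fun e => e.1 = c), x i e ≤ (w c : ℝ))
    (hxserver : ∀ i ≤ ℓ, ∀ s : S, ∑ e ∈ E.filter (fun e => e.2 = s), x i e ≤ 2 ^ i)
    (hxnested : ∀ i, 1 ≤ i → i ≤ ℓ → ∀ e, x (i - 1) e ≤ x i e)
    -- (x*_0, …, x*_ℓ) is a maximally-nested integral fractional (w, 2^i)-NMH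
    (hxsnn : ∀ i ≤ ℓ, ∀ e, 0 ≤ xs i e)
    (hxsclient : ∀ i ≤ ℓ, ∀ c : C, ∑ e ∈ E.filter (fun e => e.1 = c), xs i e ≤ (w c : ℝ))
    (hxsserver : ∀ i ≤ ℓ, ∀ s : S, ∑ e ∈ E.filter (fun e => e.2 = s), xs i e ≤ 2 ^ i)
    (hxsnested : ∀ i, 1 ≤ i → i ≤ ℓ → ∀ e, xs (i - 1) e ≤ xs i e)
    (hxsintegral : ∀ i ≤ ℓ, ∀ e, ∃ n : ℤ, xs i e = (n : ℝ))
    (hxsmaxnested : ∀ i < ℓ, ∀ s : S,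
      (∑ e ∈ E.filter (fun e => e.2 = s), xs (i + 1) e) ≠
          (∑ e ∈ E.filter (fun e => e.2 = s), xs i e) →
        (∑ e ∈ E.filter (fun e => e.2 = s), xs i e) = 2 ^ i)
    -- relative-size hypotheses
    (α : ℝ) (hα : 0 < α)
    (hrel : ∀ i < ℓ, α * (∑ e ∈ E, (x ℓ e - x i e)) ≤ ∑ e ∈ E, (xs ℓ e - xs i e))
    (hrelℓ : α * (∑ e ∈ E, x ℓ e) ≤ ∑ e ∈ E, xs ℓ e)
    (p : ℝ) (hp : 1 ≤ p) :
    ∑ s : S, (∑ e ∈ E.filter (fun e => e.2 = s), x ℓ e) ^ p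
      ≤ (2 : ℝ) ^ p / α *
        ∑ s : S, (∑ e ∈ E.filter (fun e => e.2 = s), xs ℓ e) ^ p :=
  stmt_11_general E ℓ x xs hxnn hxserver hxnested hxsnn hxsserver hxsnested hxsintegral hxsmaxnested
    α hα hrel hrelℓ p hp
end

section
/- Let G = (C, S, E) be a finite bipartite graph with client weights w : C → ℤ>0, and let z : E → ℝ≥0 be a fractional assignment, i.e., z(δ(c)) = 1 for every client c ∈ C. Then there exists an assignment A ⊆ {e ∈ E : z(e) > 0} (a set of edges containing exactly one edge incident to each client) such that for every real p ≥ 1, ∥L_A∥_p ≤ ∥L_z∥_p + ∥w∥_p, where L_A(s) = ∑_{c : cs ∈ A} w(c), L_z(s) = ∑_{c : cs ∈ E} w(c)·z(cs), ∥v∥_p = (∑_{s∈S} v(s)^p)^{1/p} for v : S → ℝ≥0, and ∥w∥_p = (∑_{c∈C} w(c)^p)^{1/p}. -/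
/-!
Lenstra–Shmoys–Tardos rounding. Among the fractional assignments `y` that are supported inside
the support of `z` and put the same load as `z` on every server, take one with the fewest
fractional edges (`0 < y e < 1`). If a set `T` of clients incident to fractional edges had fewer
than `|T|` fractional neighbours, then the fractional edges at `T` (at least two per client)
would outnumber the `|T| + |N(T)|` linear constraints fixing the client sums and server loads,
and moving along a kernel direction would make one of them integral, contradicting minimality.
By Hall's theorem the fractional clients can therefore be matched injectively to fractional
neighbours, while every other client keeps an edge of value `1`. Each server then receives at
most its fractional load plus the weight of one matched client, and Minkowski's inequality
gives the bound.
-/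

open Finset

theorem exists_ne_zero_forall_sum_mul_eq_zero {K α β : Type*} [Field K] (F : Finset α)
    (J : Finset β) (a : β → α → K) (hJF : #J < #F) :
    ∃ g : α → K, (∀ x ∉ F, g x = 0) ∧ (∃ x ∈ F, g x ≠ 0) ∧
      ∀ j ∈ J, ∑ x ∈ F, a j x * g x = 0 := by
  classical
  have hdep : ¬LinearIndependent K (fun (x : F) (j : J) => a j x) := fun hli =>
    lt_irrefl _ (hli.fintype_card_le_finrank.trans_lt (by simpa using hJF))
  obtain ⟨g, hg, x, hx⟩ := Fintype.not_linearIndependent_iff.mp hdep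
  refine ⟨fun y => if h : y ∈ F then g ⟨y, h⟩ else 0, fun y hy => dif_neg hy,
    ⟨x, x.2, by simpa using hx⟩, fun j hj => ?_⟩
  rw [← sum_coe_sort F]
  simpa [mul_comm] using congrFun hg ⟨j, hj⟩

theorem exists_add_mul_mem_Icc_notMem_Ioo {α : Type*} (F : Finset α) {y g : α → ℝ}
    (hy : ∀ x ∈ F, y x ∈ Set.Ioo 0 1) (hg : ∃ x ∈ F, g x ≠ 0) :
    ∃ t : ℝ, (∀ x ∈ F, y x + t * g x ∈ Set.Icc 0 1) ∧ ∃ x ∈ F, y x + t * g x ∉ Set.Ioo 0 1 := by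
  -- `room x / |g x|` is the step after which `y x + t * g x` leaves `(0, 1)`
  let room : α → ℝ := fun x => if 0 < g x then 1 - y x else y x
  obtain ⟨x₀, hx₀, hmin⟩ := exists_min_image (F.filter (g · ≠ 0))
    (fun x => room x / |g x|) (by simpa [Finset.Nonempty] using hg)
  simp only [mem_filter] at hx₀ hmin
  refine ⟨room x₀ / |g x₀|, fun x hx => ?_, x₀, hx₀.1, ?_⟩
  · obtain ⟨hy0, hy1⟩ := hy x hx
    have hroom : 0 ≤ room x₀ / |g x₀| := by
      obtain ⟨h0, h1⟩ := hy x₀ hx₀.1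
      unfold room; split_ifs <;> exact div_nonneg (by linarith) (abs_nonneg _)
    rcases eq_or_ne (g x) 0 with h0 | h0
    · simp [h0, hy0.le, hy1.le]
    have hle := (le_div_iff₀ (abs_pos.mpr h0)).mp (hmin x ⟨hx, h0⟩)
    unfold room at hle
    rcases h0.lt_or_gt with hneg | hpos
    · rw [abs_of_neg hneg, if_neg hneg.not_gt] at hle
      constructor <;> nlinarith
    · rw [abs_of_pos hpos, if_pos hpos] at hle
      constructor <;> nlinarith
  · have hne := abs_pos.mpr hx₀.2
    unfold room
    rcases hx₀.2.lt_or_gt with hneg | hpos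
    · rw [abs_of_neg hneg, if_neg hneg.not_gt, div_neg, neg_mul, div_mul_cancel₀ _ hneg.ne]
      simp
    · rw [abs_of_pos hpos, if_pos hpos, div_mul_cancel₀ _ hpos.ne']
      simp

theorem exists_injOn_mem_of_forall_card_le_card_biUnion {ι α : Type*} [DecidableEq α]
    (P : Finset ι) (t : ι → Finset α) (f₀ : ι → α)
    (h : ∀ T ⊆ P, #T ≤ #(T.biUnion t)) :
    ∃ f : ι → α, Set.InjOn f P ∧ (∀ i ∈ P, f i ∈ t i) ∧ ∀ i ∉ P, f i = f₀ i := by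
  classical
  obtain ⟨g, hg, hgt⟩ := (all_card_le_biUnion_card_iff_exists_injective
    (fun i : P => t i)).mp fun T => by
      simpa [card_image_of_injective _ Subtype.val_injective, image_biUnion]
        using h (T.image Subtype.val) fun i hi => by
          obtain ⟨i, -, rfl⟩ := mem_image.mp hi
          exact i.2
  refine ⟨fun i => if hi : i ∈ P then g ⟨i, hi⟩ else f₀ i, fun i hi j hj hij => ?_,
    fun i hi => by simpa [hi] using hgt ⟨i, hi⟩, fun i hi => dif_neg hi⟩
  simp only [dif_pos (mem_coe.mp hi), dif_pos (mem_coe.mp hj)] at hij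
  exact congrArg Subtype.val (hg hij)

theorem sum_rpow_sum_filter_eq_of_injOn {ι κ : Type*} [DecidableEq κ] {P : Finset ι}
    {t : Finset κ} {f : ι → κ} (hf : Set.InjOn f P) (hPt : ∀ i ∈ P, f i ∈ t) (u : ι → ℝ)
    {p : ℝ} (hp : p ≠ 0) :
    ∑ k ∈ t, (∑ i ∈ P with f i = k, u i) ^ p = ∑ i ∈ P, u i ^ p := by
  rw [← sum_fiberwise_of_maps_to hPt]
  refine sum_congr rfl fun k _ => ?_
  have hcard : #{i ∈ P | f i = k} ≤ 1 := card_le_one.mpr fun i hi j hj => by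
    simp only [mem_filter] at hi hj
    exact hf hi.1 hj.1 (hi.2.trans hj.2.symm)
  rcases Nat.le_one_iff_eq_zero_or_eq_one.mp hcard with h | h
  · simp [card_eq_zero.mp h, Real.zero_rpow hp]
  · obtain ⟨i, hi⟩ := card_eq_one.mp h
    simp [hi]

theorem rpow_sum_sum_filter_le_of_injOn {ι κ : Type*} [Fintype ι] [Fintype κ] [DecidableEq κ]
    {K : Finset ι} {f : ι → κ} (hf : Set.InjOn f K) {u : ι → ℝ} (hu : ∀ i, 0 ≤ u i) {p : ℝ}
    (hp : 0 < p) :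
    (∑ k, (∑ i ∈ K with f i = k, u i) ^ p) ^ (1 / p) ≤ (∑ i, u i ^ p) ^ (1 / p) := by
  refine Real.rpow_le_rpow (sum_nonneg fun k _ => Real.rpow_nonneg (sum_nonneg fun i _ => hu i) p)
    ?_ (by positivity)
  rw [sum_rpow_sum_filter_eq_of_injOn hf (fun _ _ => mem_univ _) _ hp.ne']
  exact sum_le_sum_of_subset_of_nonneg (subset_univ K) fun i _ _ => Real.rpow_nonneg (hu i) p

theorem rpow_sum_rpow_le_add_of_le_add {ι : Type*} (s : Finset ι) {f g h : ι → ℝ} {p : ℝ}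
    (hp : 1 ≤ p) (hf : ∀ i ∈ s, 0 ≤ f i) (hg : ∀ i ∈ s, 0 ≤ g i) (hh : ∀ i ∈ s, 0 ≤ h i)
    (hfgh : ∀ i ∈ s, f i ≤ g i + h i) :
    (∑ i ∈ s, f i ^ p) ^ (1 / p) ≤ (∑ i ∈ s, g i ^ p) ^ (1 / p) + (∑ i ∈ s, h i ^ p) ^ (1 / p) := by
  have hp0 : 0 ≤ p := by linarith
  refine le_trans (Real.rpow_le_rpow (sum_nonneg fun i hi => Real.rpow_nonneg (hf i hi) p)
    (sum_le_sum fun i hi => Real.rpow_le_rpow (hf i hi) (hfgh i hi) hp0) (by positivity)) ?_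
  exact Real.Lp_add_le_of_nonneg s hp hg hh

theorem sum_filter_eq_sum_filter_of_subset {α M : Type*} [AddCommMonoid M] {F E : Finset α}
    (hFE : F ⊆ E) {v : α → M} (hv : ∀ x ∉ F, v x = 0) (p : α → Prop) [DecidablePred p] :
    ∑ x ∈ E with p x, v x = ∑ x ∈ F with p x, v x := by
  refine (sum_subset (filter_subset_filter _ hFE) fun x hx hxF => hv x fun h => hxF ?_).symm
  exact mem_filter.mpr ⟨h, (mem_filter.mp hx).2⟩

theorem exists_ne_mem_Ioo_of_sum_eq_one {α : Type*} [DecidableEq α] {s : Finset α} {f : α → ℝ}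
    (hf : ∀ x ∈ s, 0 ≤ f x) (hsum : ∑ x ∈ s, f x = 1) {a : α} (ha : a ∈ s)
    (hfa : f a ∈ Set.Ioo 0 1) : ∃ b ∈ s, b ≠ a ∧ f b ∈ Set.Ioo 0 1 := by
  have hrest : ∑ x ∈ s.erase a, f x = 1 - f a := by rw [sum_erase_eq_sub ha, hsum]
  obtain ⟨b, hb, hfb⟩ := exists_lt_of_sum_lt (f := 0) (g := f) (s := s.erase a)
    (by simp only [Pi.zero_apply, sum_const_zero, hrest]; linarith [hfa.2])
  have hle : f b ≤ ∑ x ∈ s.erase a, f x :=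
    single_le_sum (fun x hx => hf x (mem_of_mem_erase hx)) hb
  exact ⟨b, mem_of_mem_erase hb, ne_of_mem_erase hb, hfb, by linarith [hfa.1]⟩

namespace FractionalAssignment

variable {C S : Type*} [DecidableEq C] [DecidableEq S]

noncomputable section

def load (E : Finset (C × S)) (w : C → ℤ) (y : C × S → ℝ) (s : S) : ℝ :=
  ∑ e ∈ E with e.2 = s, (w e.1 : ℝ) * y e

def fracEdges (E : Finset (C × S)) (y : C × S → ℝ) : Finset (C × S) :=
  {e ∈ E | y e ∈ Set.Ioo 0 1}

def fracNbrs (E : Finset (C × S)) (y : C × S → ℝ) (c : C) : Finset S :=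
  {e ∈ fracEdges E y | e.1 = c}.image Prod.snd

end

structure Admissible (E : Finset (C × S)) (w : C → ℤ) (z y : C × S → ℝ) : Prop where
  nonneg : ∀ e, 0 ≤ y e
  sum_eq_one : ∀ c, ∑ e ∈ E with e.1 = c, y e = 1
  pos_of_pos : ∀ e ∈ E, 0 < y e → 0 < z e
  load_eq : load E w y = load E w z

variable {E : Finset (C × S)} {w : C → ℤ} {z y : C × S → ℝ}

theorem mem_fracNbrs {c : C} {s : S} : s ∈ fracNbrs E y c ↔ (c, s) ∈ fracEdges E y := by
  simp [fracNbrs]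

theorem Admissible.exists_pos (hy : Admissible E w z y) (c : C) :
    ∃ s, (c, s) ∈ E ∧ 0 < y (c, s) := by
  obtain ⟨e, he, hpos⟩ := exists_lt_of_sum_lt (f := 0) (g := y)
    (s := {e ∈ E | e.1 = c}) (by simp [hy.sum_eq_one c])
  obtain ⟨heE, rfl⟩ := mem_filter.mp he
  exact ⟨e.2, heE, hpos⟩

theorem one_le_of_not_nonempty_fracNbrs {c : C} (hc : ¬(fracNbrs E y c).Nonempty) {s : S}
    (hE : (c, s) ∈ E) (hpos : 0 < y (c, s)) : 1 ≤ y (c, s) := by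
  by_contra hlt
  exact hc ⟨s, mem_fracNbrs.mpr (mem_filter.mpr ⟨hE, hpos, not_le.mp hlt⟩)⟩

theorem Admissible.two_le_card_fracEdges (hy : Admissible E w z y) {c : C}
    (hc : (fracNbrs E y c).Nonempty) : 2 ≤ #{e ∈ fracEdges E y | e.1 = c} := by
  obtain ⟨s, hs⟩ := hc
  obtain ⟨hE, hfrac⟩ := mem_filter.mp (mem_fracNbrs.mp hs)
  obtain ⟨e, he, hne, hefrac⟩ := exists_ne_mem_Ioo_of_sum_eq_one (fun e _ => hy.nonneg e)
    (hy.sum_eq_one c) (mem_filter.mpr ⟨hE, rfl⟩) hfrac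
  obtain ⟨heE, rfl⟩ := mem_filter.mp he
  exact one_lt_card.mpr ⟨e, mem_filter.mpr ⟨mem_filter.mpr ⟨heE, hefrac⟩, rfl⟩,
    (e.1, s), mem_filter.mpr ⟨mem_filter.mpr ⟨hE, hfrac⟩, rfl⟩, hne⟩

theorem Admissible.add_mul (hy : Admissible E w z y) {g : C × S → ℝ}
    (hg : ∀ e ∉ fracEdges E y, g e = 0) (hg_sum : ∀ c, ∑ e ∈ E with e.1 = c, g e = 0)
    (hg_load : ∀ s, load E w g s = 0) {t : ℝ} (ht : ∀ e ∈ fracEdges E y, 0 ≤ y e + t * g e) :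
    Admissible E w z (fun e => y e + t * g e) where
  nonneg e := by
    by_cases he : e ∈ fracEdges E y
    · exact ht e he
    · simpa [hg e he] using hy.nonneg e
  sum_eq_one c := by
    rw [sum_add_distrib, ← mul_sum, hg_sum c, mul_zero, add_zero, hy.sum_eq_one c]
  pos_of_pos e hE hpos := by
    by_cases he : e ∈ fracEdges E y
    · exact hy.pos_of_pos e hE (mem_filter.mp he).2.1
    · exact hy.pos_of_pos e hE (by simpa [hg e he] using hpos)
  load_eq := by
    funext s
    have hsplit : load E w (fun e => y e + t * g e) s = load E w y s + t * load E w g s := by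
      simp only [load, mul_sum, ← sum_add_distrib]
      exact sum_congr rfl fun e _ => by ring
    rw [hsplit, hg_load, mul_zero, add_zero, hy.load_eq]

theorem card_fracEdges_add_mul_lt {g : C × S → ℝ} (hg : ∀ e ∉ fracEdges E y, g e = 0) {t : ℝ}
    (ht : ∃ e ∈ fracEdges E y, y e + t * g e ∉ Set.Ioo 0 1) :
    #(fracEdges E (fun e => y e + t * g e)) < #(fracEdges E y) := by
  refine card_lt_card ((ssubset_iff_of_subset fun e he => ?_).mpr ?_)
  · by_contra hy'
    obtain ⟨hE, hfrac⟩ := mem_filter.mp he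
    simp only [hg e hy', mul_zero, add_zero] at hfrac
    exact hy' (mem_filter.mpr ⟨hE, hfrac⟩)
  · obtain ⟨e, he, hbd⟩ := ht
    exact ⟨e, he, fun he' => hbd (mem_filter.mp he').2⟩

theorem Admissible.exists_direction (hy : Admissible E w z y) {T : Finset C}
    (hT : ∀ c ∈ T, (fracNbrs E y c).Nonempty) (hlt : #(T.biUnion (fracNbrs E y)) < #T) :
    ∃ g : C × S → ℝ, (∀ e ∉ fracEdges E y, g e = 0) ∧ (∃ e ∈ fracEdges E y, g e ≠ 0) ∧
      (∀ c, ∑ e ∈ E with e.1 = c, g e = 0) ∧ ∀ s, load E w g s = 0 := by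
  set N := T.biUnion (fracNbrs E y)
  set F := {e ∈ fracEdges E y | e.1 ∈ T}
  have hFfrac : F ⊆ fracEdges E y := filter_subset _ _
  have hFE : F ⊆ E := hFfrac.trans (filter_subset _ _)
  have hcardF : 2 * #T ≤ #F := by
    rw [card_eq_sum_card_fiberwise (f := Prod.fst) (s := F) (t := T)
      fun e he => (mem_filter.mp he).2]
    refine (mul_comm _ _).trans_le (card_nsmul_le_sum T _ 2 fun c hc => ?_)
    rw [filter_filter, filter_congr fun e _ => and_iff_right_of_imp (· ▸ hc)]
    exact hy.two_le_card_fracEdges (hT c hc)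
  -- one constraint per client of `T` (its sum) and per server of `N` (its load)
  obtain ⟨g, hgF, ⟨e, he, hge⟩, hg⟩ := exists_ne_zero_forall_sum_mul_eq_zero F (T.disjSum N)
    (Sum.elim (fun c e => if e.1 = c then 1 else 0) fun s e => if e.2 = s then (w e.1 : ℝ) else 0)
    (by rw [card_disjSum]; omega)
  refine ⟨g, fun e he => hgF e fun heF => he (hFfrac heF), ⟨e, hFfrac he, hge⟩,
    fun c => ?_, fun s => ?_⟩
  · by_cases hc : c ∈ T
    · rw [sum_filter_eq_sum_filter_of_subset hFE hgF, sum_filter]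
      simpa [ite_mul] using hg (.inl c) (by simp [hc])
    · refine sum_eq_zero fun e he => hgF e fun heF => hc ?_
      exact (mem_filter.mp he).2 ▸ (mem_filter.mp heF).2
  · by_cases hs : s ∈ N
    · rw [load, sum_filter_eq_sum_filter_of_subset hFE fun e he => by simp [hgF e he], sum_filter]
      simpa [ite_mul] using hg (.inr s) (by simp [hs])
    · refine sum_eq_zero fun e he => ?_
      rw [hgF e fun heF => hs ?_, mul_zero]
      obtain ⟨hfrac, heT⟩ := mem_filter.mp heF
      exact (mem_filter.mp he).2 ▸ mem_biUnion.mpr ⟨e.1, heT, mem_fracNbrs.mpr hfrac⟩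

theorem Admissible.exists_card_fracEdges_lt (hy : Admissible E w z y) {T : Finset C}
    (hT : ∀ c ∈ T, (fracNbrs E y c).Nonempty) (hlt : #(T.biUnion (fracNbrs E y)) < #T) :
    ∃ y', Admissible E w z y' ∧ #(fracEdges E y') < #(fracEdges E y) := by
  obtain ⟨g, hg, hg_ne, hg_sum, hg_load⟩ := hy.exists_direction hT hlt
  obtain ⟨t, ht, hbd⟩ := exists_add_mul_mem_Icc_notMem_Ioo (fracEdges E y)
    (fun e he => (mem_filter.mp he).2) hg_ne
  exact ⟨_, hy.add_mul hg hg_sum hg_load fun e he => (ht e he).1, card_fracEdges_add_mul_lt hg hbd⟩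

theorem exists_admissible_forall_card_le_card_biUnion (hz : Admissible E w z z) :
    ∃ y, Admissible E w z y ∧ ∀ T : Finset C, (∀ c ∈ T, (fracNbrs E y c).Nonempty) →
      #T ≤ #(T.biUnion (fracNbrs E y)) := by
  obtain ⟨y, hy, hmin⟩ := (measure fun y => #(fracEdges E y)).wf.has_min
    {y | Admissible E w z y} ⟨z, hz⟩
  refine ⟨y, hy, fun T hT => not_lt.mp fun hlt => ?_⟩
  obtain ⟨y', hy', hlt'⟩ := Admissible.exists_card_fracEdges_lt hy hT hlt
  exact hmin y' hy' hlt'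

theorem Admissible.exists_rounding [Fintype C] (hy : Admissible E w z y)
    (hall : ∀ T : Finset C, (∀ c ∈ T, (fracNbrs E y c).Nonempty) →
      #T ≤ #(T.biUnion (fracNbrs E y))) :
    ∃ (σ : C → S) (K : Finset C), (∀ c, (c, σ c) ∈ E ∧ 0 < y (c, σ c)) ∧ Set.InjOn σ K ∧
      ∀ c ∉ K, 1 ≤ y (c, σ c) := by
  choose σ₀ hσ₀ using hy.exists_pos
  set K : Finset C := {c | (fracNbrs E y c).Nonempty}
  obtain ⟨σ, hinj, hσK, hσ⟩ := exists_injOn_mem_of_forall_card_le_card_biUnion K (fracNbrs E y) σ₀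
    fun T hT => hall T fun c hc => (mem_filter.mp (hT hc)).2
  have hK : ∀ c ∉ K, ¬(fracNbrs E y c).Nonempty := fun c hc h => hc (by simp [K, h])
  refine ⟨σ, K, fun c => ?_, hinj, fun c hc => ?_⟩
  · by_cases hc : c ∈ K
    · obtain ⟨hE, hpos, -⟩ := mem_filter.mp (mem_fracNbrs.mp (hσK c hc))
      exact ⟨hE, hpos⟩
    · exact hσ c hc ▸ hσ₀ c
  · rw [hσ c hc]
    exact one_le_of_not_nonempty_fracNbrs (hK c hc) (hσ₀ c).1 (hσ₀ c).2

theorem sum_mul_le_load (hy : ∀ e, 0 ≤ y e) (hw : ∀ c, 0 ≤ w c) {P : Finset C} {s : S}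
    (hP : ∀ c ∈ P, (c, s) ∈ E) : ∑ c ∈ P, (w c : ℝ) * y (c, s) ≤ load E w y s := by
  calc ∑ c ∈ P, (w c : ℝ) * y (c, s) = ∑ e ∈ P.image (·, s), (w e.1 : ℝ) * y e :=
        by rw [sum_image fun a _ b _ h => (Prod.mk.inj h).1]
    _ ≤ load E w y s := by
        refine sum_le_sum_of_subset_of_nonneg (fun e he => ?_)
          fun e _ _ => mul_nonneg (by exact_mod_cast hw e.1) (hy e)
        obtain ⟨c, hc, rfl⟩ := mem_image.mp he
        exact mem_filter.mpr ⟨hP c hc, rfl⟩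

theorem sum_filter_le_load_add [Fintype C] (hy : ∀ e, 0 ≤ y e) (hw : ∀ c, 0 ≤ w c)
    {σ : C → S} (hσ : ∀ c, (c, σ c) ∈ E) {K : Finset C} (hK : ∀ c ∉ K, 1 ≤ y (c, σ c)) (s : S) :
    ∑ c with σ c = s, (w c : ℝ) ≤ load E w y s + ∑ c ∈ K with σ c = s, (w c : ℝ) := by
  rw [← sum_filter_add_sum_filter_not _ (· ∈ K), add_comm]
  have hfilter : {c ∈ ({c | σ c = s} : Finset C) | c ∈ K} = {c ∈ K | σ c = s} := by
    ext c; simp [and_comm]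
  rw [hfilter]
  gcongr
  calc ∑ c ∈ ({c | σ c = s} : Finset C) with c ∉ K, (w c : ℝ)
      ≤ ∑ c ∈ ({c | σ c = s} : Finset C) with c ∉ K, (w c : ℝ) * y (c, s) := by
        refine sum_le_sum fun c hc => ?_
        obtain ⟨hcs, hcK⟩ := by simpa using hc
        exact le_mul_of_one_le_right (by exact_mod_cast hw c) (hcs ▸ hK c hcK)
    _ ≤ load E w y s := sum_mul_le_load hy hw fun c hc => by
        obtain ⟨hcs, -⟩ := by simpa using hc
        exact hcs ▸ hσ c

end FractionalAssignment

/-- (Rounding, Lenstra–Shmoys–Tardos.) Every fractional assignment `z`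
can be rounded to an integral assignment `A` supported on `supp(z)` with
`∥L_A∥_p ≤ ∥L_z∥_p + ∥w∥_p` for all real `p ≥ 1`. -/
theorem stmt_14 {C S : Type*} [Fintype C] [Fintype S] [DecidableEq C] [DecidableEq S]
    (E : Finset (C × S)) (w : C → ℤ) (hw : ∀ c, 0 < w c)
    (z : C × S → ℝ) (hznn : ∀ e, 0 ≤ z e)
    (hzc : ∀ c : C, ∑ e ∈ E.filter (fun e => e.1 = c), z e = 1) :
    ∃ A : Finset (C × S),
      A ⊆ E.filter (fun e => 0 < z e) ∧
      (∀ c : C, ∃! e, e ∈ A ∧ e.1 = c) ∧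
      ∀ p : ℝ, 1 ≤ p →
        (∑ s : S, (∑ c ∈ Finset.univ.filter (fun c => (c, s) ∈ A), (w c : ℝ)) ^ p) ^ (1 / p)
          ≤ (∑ s : S, (∑ e ∈ E.filter (fun e => e.2 = s), (w e.1 : ℝ) * z e) ^ p) ^ (1 / p)
            + (∑ c : C, (w c : ℝ) ^ p) ^ (1 / p) := by
  have hw' : ∀ c, 0 ≤ w c := fun c => (hw c).le
  have hwR : ∀ c, (0 : ℝ) ≤ w c := fun c => by exact_mod_cast hw' c
  obtain ⟨y, hy, hall⟩ := FractionalAssignment.exists_admissible_forall_card_le_card_biUnion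
    (w := w) ⟨hznn, hzc, fun _ _ h => h, rfl⟩
  obtain ⟨σ, K, hσ, hinj, hK⟩ := hy.exists_rounding hall
  have hA : ∀ c s, (c, s) ∈ univ.image (fun c => (c, σ c)) ↔ σ c = s := by
    simp [eq_comm]
  refine ⟨univ.image fun c => (c, σ c), fun e he => ?_, fun c => ⟨(c, σ c), by simp, ?_⟩,
    fun p hp => ?_⟩
  · obtain ⟨c, -, rfl⟩ := mem_image.mp he
    exact mem_filter.mpr ⟨(hσ c).1, hy.pos_of_pos _ (hσ c).1 (hσ c).2⟩
  · rintro _ ⟨he, rfl⟩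
    obtain ⟨c, -, rfl⟩ := mem_image.mp he
    rfl
  simp only [hA]
  calc _ ≤ (∑ s, FractionalAssignment.load E w z s ^ p) ^ (1 / p)
        + (∑ s, (∑ c ∈ K with σ c = s, (w c : ℝ)) ^ p) ^ (1 / p) :=
      rpow_sum_rpow_le_add_of_le_add _ hp (fun _ _ => sum_nonneg fun c _ => hwR c)
        (fun _ _ => sum_nonneg fun e _ => mul_nonneg (hwR e.1) (hznn e))
        (fun _ _ => sum_nonneg fun c _ => hwR c) fun s _ => congrFun hy.load_eq s ▸
          FractionalAssignment.sum_filter_le_load_add hy.nonneg hw' (fun c => (hσ c).1) hK s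
    _ ≤ _ := add_le_add le_rfl (rpow_sum_sum_filter_le_of_injOn hinj hwR (by linarith))
end
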